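/- arXiv:2405.17318 — 2 statements merged into one kernel-verified Lean document; each statement's English description precedes it below -/
import Mathlib

section
/- If μ is a nonzero boundedly finite Borel measure on B² \ {(0,0)} satisfying μ(tA) = t^{-α} μ(A) for all t > 0 and all Borel A, and if the set {(x,y) : max(‖x‖,‖y‖) ≥ r} had boundary of positive μ-measure for some r > 0, then μ({(x,y) : max(‖x‖,‖y‖) ≥ r}) = ∞. Hence the assumption of positive boundary measure contradicts bounded finiteness, since A_r contains the disjoint union over n ≥ 1 of the boundaries of n^{1/α} A_r, each of μ-measure n^{-1} μ(∂A_r). -/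
open MeasureTheory Set Filter Pointwise

lemma harmonic_ofReal_tsum_top : ∑' n : ℕ, ENNReal.ofReal (1 / ((n : ℝ) + 1)) = ⊤ := by
  by_contra h
  have hsum : Summable (fun n : ℕ => (ENNReal.ofReal (1 / ((n : ℝ) + 1))).toReal) :=
    ENNReal.summable_toReal h
  have hsum' : Summable (fun n : ℕ => 1 / ((n : ℝ) + 1)) := by
    convert hsum using 2 with n
    rw [ENNReal.toReal_ofReal (by positivity)]
  have : Summable (fun n : ℕ => 1 / (n : ℝ)) := by
    rw [← summable_nat_add_iff 1]
    convert hsum' using 2 with n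
    · rfl
    · push_cast; ring
  exact Real.not_summable_one_div_natCast this

/-- If a Borel measure `μ` on `B² \ {0}` is homogeneous of order `-α` and the
boundary of `A_r = {(x,y) : max(‖x‖,‖y‖) ≥ r}` has positive `μ`-measure, then `μ(A_r) = ∞`
(contradicting bounded finiteness). -/
theorem stmt1 {B : Type*} [NormedAddCommGroup B] [NormedSpace ℝ B]
    [TopologicalSpace.SeparableSpace B] [CompleteSpace B]
    [MeasurableSpace (B × B)] [BorelSpace (B × B)]
    (μ : Measure (B × B)) (α : ℝ) (hα : 0 < α)
    (hzero : μ ({(0, 0)} : Set (B × B)) = 0) (hne : μ ≠ 0)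
    (hhom : ∀ t : ℝ, 0 < t → ∀ A : Set (B × B), MeasurableSet A →
      μ (t • A) = ENNReal.ofReal (t ^ (-α)) * μ A) :
    ∀ r : ℝ, 0 < r →
      0 < μ (frontier {p : B × B | r ≤ max ‖p.1‖ ‖p.2‖}) →
      μ {p : B × B | r ≤ max ‖p.1‖ ‖p.2‖} = ⊤ := by
  intro r hr hpos
  have hset : {p : B × B | r ≤ max ‖p.1‖ ‖p.2‖} = (Metric.ball (0 : B × B) r)ᶜ := by
    ext p
    simp only [mem_setOf_eq, mem_compl_iff, Metric.mem_ball, dist_zero_right, not_lt,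
      Prod.norm_def]
  have hfr : frontier {p : B × B | r ≤ max ‖p.1‖ ‖p.2‖} = Metric.sphere (0 : B × B) r := by
    rw [hset, frontier_compl, frontier_ball _ hr.ne']
  rw [hfr] at hpos
  set c := μ (Metric.sphere (0 : B × B) r) with hc
  -- scaled spheres
  have hsmul : ∀ t : ℝ, 0 < t →
      t • Metric.sphere (0 : B × B) r = Metric.sphere (0 : B × B) (t * r) := by
    intro t ht
    ext x
    rw [Set.mem_smul_set_iff_inv_smul_mem₀ ht.ne']
    simp only [Metric.mem_sphere, dist_zero_right, norm_smul, norm_inv,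
      Real.norm_eq_abs, abs_of_pos ht]
    rw [inv_mul_eq_iff_eq_mul₀ ht.ne']
  -- the radii sequence
  set t : ℕ → ℝ := fun n => ((n : ℝ) + 1) ^ (α⁻¹) with ht_def
  have ht_pos : ∀ n, 0 < t n := fun n => Real.rpow_pos_of_pos (by positivity) _
  have ht_one : ∀ n, 1 ≤ t n := fun n =>
    Real.one_le_rpow (by simp [Nat.cast_nonneg]) (by positivity)
  have ht_mono : StrictMono t := fun m n hmn => by
    apply Real.rpow_lt_rpow (by positivity) (by exact_mod_cast by linarith [show (m:ℝ) < n from Nat.cast_lt.2 hmn])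
    positivity
  -- the family of spheres
  set f : ℕ → Set (B × B) := fun n => Metric.sphere (0 : B × B) (t n * r) with hf_def
  have hf_meas : ∀ n, MeasurableSet (f n) := fun n =>
    Metric.isClosed_sphere.measurableSet
  have hf_disj : Pairwise (Function.onFun Disjoint f) := by
    intro m n hmn
    apply Set.disjoint_left.2
    intro x hxm hxn
    simp only [hf_def, Metric.mem_sphere, dist_zero_right] at hxm hxn
    have : t m * r = t n * r := hxm ▸ hxn
    exact hmn (ht_mono.injective (mul_right_cancel₀ hr.ne' this))
  have hf_sub : ∀ n, f n ⊆ {p : B × B | r ≤ max ‖p.1‖ ‖p.2‖} := by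
    intro n x hx
    simp only [hf_def, Metric.mem_sphere, dist_zero_right] at hx
    have : r ≤ t n * r := le_mul_of_one_le_left hr.le (ht_one n)
    have hx' : ‖x‖ = t n * r := hx
    simp only [mem_setOf_eq, ← Prod.norm_def, hx']
    exact this
  -- measure of each sphere
  have hf_meas_val : ∀ n, μ (f n) = ENNReal.ofReal (1 / ((n : ℝ) + 1)) * c := by
    intro n
    have := hhom (t n) (ht_pos n) (Metric.sphere (0 : B × B) r)
      Metric.isClosed_sphere.measurableSet
    rw [hsmul (t n) (ht_pos n)] at this
    rw [hf_def]
    simp only []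
    rw [this]
    congr 1
    rw [ht_def]
    simp only []
    rw [← Real.rpow_mul (by positivity : (0:ℝ) ≤ (n:ℝ) + 1),
      show α⁻¹ * (-α) = -1 by field_simp, Real.rpow_neg_one, one_div]
  -- conclude
  have hge : μ {p : B × B | r ≤ max ‖p.1‖ ‖p.2‖} ≥ μ (⋃ n, f n) :=
    measure_mono (iUnion_subset hf_sub)
  have hU : μ (⋃ n, f n) = ∑' n, μ (f n) := measure_iUnion hf_disj hf_meas
  have hsum : ∑' n : ℕ, μ (f n) = (∑' n : ℕ, ENNReal.ofReal (1 / ((n : ℝ) + 1))) * c := by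
    rw [← ENNReal.tsum_mul_right]
    exact tsum_congr hf_meas_val
  rw [hsum, harmonic_ofReal_tsum_top, ENNReal.top_mul hpos.ne'] at hU
  exact top_unique (hU ▸ hge)
end

section
/- Let [X,Y] be a mean-zero regularly varying random element in L² × L² with index −α, α > 2, exponent measure μ normalized by μ{(x,y): ‖x‖∨‖y‖ > 1} = 1, and scaling sequence b(n). Then the conditional expectation E[⟨X/b(n), Y/b(n)⟩ | ‖X‖ ∨ ‖Y‖ > b(n)] converges, as n → ∞, to the extremal covariance σ_{XY} = ∫_{‖x‖∨‖y‖>1} ⟨x,y⟩ μ(dx,dy). -/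
set_option linter.unusedSectionVars false
set_option linter.unusedVariables false
set_option maxHeartbeats 1000000


open MeasureTheory Set Filter Topology Pointwise
open scoped RealInnerProductSpace

namespace Stmt6

lemma indicator_pt {γ : Type*} {δ' : Type*} {v : γ} {w : δ'} {A : Set γ} {S : Set δ'}
    (f : γ → ℝ) (g : δ' → ℝ) (hiff : v ∈ A ↔ w ∈ S) (hval : f v = g w) :
    A.indicator f v = S.indicator g w := by
  classical
  by_cases h : v ∈ A
  · rw [Set.indicator_of_mem h, Set.indicator_of_mem (hiff.mp h), hval]
  · rw [Set.indicator_of_notMem h, Set.indicator_of_notMem (fun hs => h (hiff.mpr hs))]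


noncomputable def cl (u : ℝ) : ℝ := min 1 (max u 0)
lemma cl_nonneg (u : ℝ) : 0 ≤ cl u := le_min (by norm_num) (le_max_right _ _)
lemma cl_le_one (u : ℝ) : cl u ≤ 1 := min_le_left _ _
lemma cl_of_nonpos {u : ℝ} (h : u ≤ 0) : cl u = 0 := by simp [cl, max_eq_right h]
lemma cl_of_one_le {u : ℝ} (h : 1 ≤ u) : cl u = 1 := by
  have : max u 0 = u := max_eq_left (by linarith)
  simp [cl, this, min_eq_left h]
lemma continuous_cl : Continuous cl := by unfold cl; fun_prop

lemma exists_dyadic_up {x : ℝ} (hx : 1 < x) : ∃ j : ℕ, (2:ℝ)^j < x ∧ x ≤ 2^(j+1) := by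
  have hex : ∃ n : ℕ, x ≤ 2^(n+1) := by
    obtain ⟨n, hn⟩ := pow_unbounded_of_one_lt x (by norm_num : (1:ℝ) < 2)
    exact ⟨n, hn.le.trans (by gcongr <;> norm_num)⟩
  classical
  refine ⟨Nat.find hex, ?_, Nat.find_spec hex⟩
  rcases Nat.eq_zero_or_pos (Nat.find hex) with h0 | hpos
  · simpa [h0] using hx
  · obtain ⟨k, hk⟩ : ∃ k, Nat.find hex = k + 1 := ⟨Nat.find hex - 1, by omega⟩
    have := Nat.find_min hex (m := k) (by omega)
    push_neg at this
    rw [hk]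
    exact this

lemma geom_ofReal_tsum {c r : ℝ} (hc : 0 ≤ c) (hr0 : 0 ≤ r) (hr1 : r < 1) :
    ∑' j : ℕ, ENNReal.ofReal (c * r^j) = ENNReal.ofReal (c * (1-r)⁻¹) := by
  rw [← ENNReal.ofReal_tsum_of_nonneg (fun j => by positivity)
    ((summable_geometric_of_lt_one hr0 hr1).mul_left c)]
  rw [tsum_mul_left, tsum_geometric_of_lt_one hr0 hr1]

lemma rpow_dyadic (j : ℕ) {K : ℝ} (e : ℝ) (hK : 0 < K) :
    ((2:ℝ)^j * K) ^ e = ((2:ℝ)^e)^j * K^e := by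
  rw [Real.mul_rpow (by positivity) hK.le, ← Real.rpow_natCast (2:ℝ) j,
    ← Real.rpow_mul (by norm_num), mul_comm (j:ℝ) e, Real.rpow_mul (by norm_num),
    Real.rpow_natCast]

lemma sq_rpow_cancel {x : ℝ} (hx : 0 < x) (lam : ℝ) : x^2 * x^(-lam) = x^(2-lam) := by
  rw [← Real.rpow_natCast x 2, ← Real.rpow_add hx]
  norm_num [sub_eq_add_neg]

section Hilbert
variable {H : Type*} [NormedAddCommGroup H] [InnerProductSpace ℝ H]
    [SecondCountableTopology H] [MeasurableSpace H] [BorelSpace H]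

noncomputable def Np (p : H × H) : ℝ := max ‖p.1‖ ‖p.2‖

lemma continuous_Np : Continuous (Np (H := H)) :=
  continuous_fst.norm.max continuous_snd.norm

lemma Np_nonneg (p : H × H) : 0 ≤ Np p := le_max_of_le_left (norm_nonneg _)

lemma measurableSet_Np_gt (r : ℝ) : MeasurableSet {p : H × H | r < Np p} :=
  (isOpen_lt continuous_const continuous_Np).measurableSet

lemma abs_inner_le_Np_sq (p : H × H) : |⟪p.1, p.2⟫| ≤ Np p ^ 2 := by
  refine (abs_real_inner_le_norm p.1 p.2).trans ?_
  have h1 : ‖p.1‖ ≤ Np p := le_max_left _ _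
  have h2 : ‖p.2‖ ≤ Np p := le_max_right _ _
  have := mul_le_mul h1 h2 (norm_nonneg _) (Np_nonneg p)
  nlinarith

lemma Np_smul {c : ℝ} (hc : 0 ≤ c) (p : H × H) : Np (c • p) = c * Np p := by
  simp only [Np, Prod.smul_fst, Prod.smul_snd, norm_smul, Real.norm_eq_abs,
    abs_of_nonneg hc]
  rw [mul_max_of_nonneg _ _ hc]

lemma mu_gt {α : ℝ} {μ : Measure (H × H)}
    (hhom : ∀ t : ℝ, 0 < t → ∀ A : Set (H × H), MeasurableSet A →
      μ (t • A) = ENNReal.ofReal (t ^ (-α)) * μ A)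
    (hnorm : μ {p : H × H | 1 < Np p} = 1) {r : ℝ} (hr : 0 < r) :
    μ {p : H × H | r < Np p} = ENNReal.ofReal (r ^ (-α)) := by
  have hset : r • {p : H × H | 1 < Np p} = {p : H × H | r < Np p} := by
    ext p
    rw [Set.mem_smul_set_iff_inv_smul_mem₀ hr.ne']
    simp only [Set.mem_setOf_eq, Np_smul (by positivity : (0:ℝ) ≤ r⁻¹) p]
    rw [inv_mul_eq_div, lt_div_iff₀ hr, one_mul]
  rw [← hset, hhom r hr _ (measurableSet_Np_gt 1), hnorm, mul_one]

end Hilbert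

/-- dyadic tail bound for lintegrals -/
lemma lintegral_tail_bound {Ω : Type*} [MeasurableSpace Ω] (P : Measure Ω)
    {T : Ω → ℝ} (hT : Measurable T) {a : ℝ} (ha : 0 < a) :
    ∫⁻ ω, Set.indicator {ω | a < T ω} (fun ω => ENNReal.ofReal ((T ω)^2)) ω ∂P
      ≤ ∑' j : ℕ, ENNReal.ofReal (4 * ((2:ℝ)^j * a)^2) * P {ω | (2:ℝ)^j * a < T ω} := by
  have hpt : ∀ ω, Set.indicator {ω | a < T ω} (fun ω => ENNReal.ofReal ((T ω)^2)) ω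
      ≤ ∑' j : ℕ, Set.indicator {ω | (2:ℝ)^j * a < T ω}
          (fun _ => ENNReal.ofReal (4 * ((2:ℝ)^j * a)^2)) ω := by
    intro ω
    rcases le_or_gt (T ω) a with h | h
    · rw [Set.indicator_of_notMem (by simpa using not_lt.mpr h)]
      exact zero_le
    · obtain ⟨j, hj1, hj2⟩ := exists_dyadic_up (x := T ω / a) ((one_lt_div ha).mpr h)
      have hj1' : (2:ℝ)^j * a < T ω := (lt_div_iff₀ ha).mp hj1
      have hj2' : T ω ≤ 2 * ((2:ℝ)^j * a) := by
        have h2 := (div_le_iff₀ ha).mp hj2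
        have hp : (2:ℝ)^(j+1) = 2 * 2^j := by ring
        rw [hp] at h2
        linarith
      rw [Set.indicator_of_mem (show ω ∈ {ω | a < T ω} from h)]
      refine le_trans ?_ (ENNReal.le_tsum j)
      rw [Set.indicator_of_mem (show ω ∈ {ω | (2:ℝ)^j * a < T ω} from hj1')]
      apply ENNReal.ofReal_le_ofReal
      have h0 : 0 ≤ T ω := le_trans ha.le h.le
      nlinarith [sq_nonneg (2 * ((2:ℝ)^j * a) - T ω)]
  calc ∫⁻ ω, Set.indicator {ω | a < T ω} (fun ω => ENNReal.ofReal ((T ω)^2)) ω ∂P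
      ≤ ∫⁻ ω, ∑' j : ℕ, Set.indicator {ω | (2:ℝ)^j * a < T ω}
          (fun _ => ENNReal.ofReal (4 * ((2:ℝ)^j * a)^2)) ω ∂P := lintegral_mono hpt
  _ = ∑' j : ℕ, ∫⁻ ω, Set.indicator {ω | (2:ℝ)^j * a < T ω}
          (fun _ => ENNReal.ofReal (4 * ((2:ℝ)^j * a)^2)) ω ∂P := by
        refine lintegral_tsum fun j => ?_
        exact (Measurable.indicator measurable_const
          (measurableSet_lt measurable_const hT)).aemeasurable
  _ = ∑' j : ℕ, ENNReal.ofReal (4 * ((2:ℝ)^j * a)^2) * P {ω | (2:ℝ)^j * a < T ω} := by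
        refine tsum_congr fun j => ?_
        rw [lintegral_indicator_const (measurableSet_lt measurable_const hT)]

section Hilbert2
variable {H : Type*} [NormedAddCommGroup H] [InnerProductSpace ℝ H]
    [SecondCountableTopology H] [MeasurableSpace H] [BorelSpace H]
    {Ω : Type*} [MeasurableSpace Ω] {P : Measure Ω} [IsProbabilityMeasure P]
    {X Y : Ω → H} {b : ℕ → ℝ} {μ : Measure (H × H)} {α : ℝ}

noncomputable def Ff (r s : ℝ) (p : H × H) : ℝ := cl ((Np p - r)/(s - r))

lemma Ff_cont (r s : ℝ) : Continuous (Ff (H := H) r s) :=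
  continuous_cl.comp ((continuous_Np.sub continuous_const).div_const _)

lemma Ff_nonneg (r s : ℝ) (p : H × H) : 0 ≤ Ff r s p := cl_nonneg _
lemma Ff_le_one (r s : ℝ) (p : H × H) : Ff r s p ≤ 1 := cl_le_one _

lemma Ff_eq_zero {r s : ℝ} (hrs : r < s) {p : H × H} (h : Np p ≤ r) : Ff r s p = 0 :=
  cl_of_nonpos (div_nonpos_of_nonpos_of_nonneg (by linarith) (by linarith))

lemma Ff_eq_one {r s : ℝ} (hrs : r < s) {p : H × H} (h : s ≤ Np p) : Ff r s p = 1 :=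
  cl_of_one_le ((le_div_iff₀ (by linarith)).mpr (by linarith))

lemma Ff_integrable {r s : ℝ} (hr : 0 < r) (hrs : r < s)
    (hfin : ∀ A : Set (H × H), MeasurableSet A →
      (∃ ε : ℝ, 0 < ε ∧ ∀ p ∈ A, ε ≤ max ‖p.1‖ ‖p.2‖) → μ A < ⊤) :
    Integrable (Ff r s) μ := by
  have heq : Ff (H := H) r s = Set.indicator {p : H × H | r < Np p} (Ff r s) := by
    funext p
    rw [Set.indicator_apply]
    split_ifs with h
    · rfl
    · exact Ff_eq_zero hrs (not_lt.mp (by simpa using h))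
  rw [heq, integrable_indicator_iff (measurableSet_Np_gt r)]
  apply Measure.integrableOn_of_bounded (M := 1)
  · exact (hfin _ (measurableSet_Np_gt r) ⟨r, hr, fun p hp => le_of_lt (by simpa [Np] using hp)⟩).ne
  · exact (Ff_cont r s).aestronglyMeasurable
  · filter_upwards with p
    rw [Real.norm_eq_abs, abs_of_nonneg (Ff_nonneg r s p)]
    exact Ff_le_one r s p

lemma indicator_one_integrable {S : Set (H × H)} (hS : MeasurableSet S) (hSfin : μ S < ⊤) :
    Integrable (Set.indicator S fun _ => (1:ℝ)) μ := by
  rw [integrable_indicator_iff hS]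
  exact integrableOn_const hSfin.ne

lemma integral_Ff_le {r s : ℝ} (hr : 0 < r) (hrs : r < s)
    (hfin : ∀ A : Set (H × H), MeasurableSet A →
      (∃ ε : ℝ, 0 < ε ∧ ∀ p ∈ A, ε ≤ max ‖p.1‖ ‖p.2‖) → μ A < ⊤) :
    ∫ p, Ff r s p ∂μ ≤ (μ {p : H × H | r < Np p}).toReal := by
  have hSfin : μ {p : H × H | r < Np p} < ⊤ :=
    hfin _ (measurableSet_Np_gt r) ⟨r, hr, fun p hp => le_of_lt (by simpa [Np] using hp)⟩
  have h1 : ∫ p, Ff r s p ∂μ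
      ≤ ∫ p, Set.indicator {p : H × H | r < Np p} (fun _ => (1:ℝ)) p ∂μ := by
    apply integral_mono (Ff_integrable hr hrs hfin)
      (indicator_one_integrable (measurableSet_Np_gt r) hSfin)
    intro p
    rw [Set.indicator_apply]
    split_ifs with h
    · exact Ff_le_one r s p
    · exact le_of_eq (Ff_eq_zero hrs (not_lt.mp (by simpa using h)))
  rwa [integral_indicator_const (1:ℝ) (measurableSet_Np_gt r), smul_eq_mul, mul_one] at h1

lemma le_integral_Ff {r s : ℝ} (hr : 0 < r) (hrs : r < s)
    (hfin : ∀ A : Set (H × H), MeasurableSet A →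
      (∃ ε : ℝ, 0 < ε ∧ ∀ p ∈ A, ε ≤ max ‖p.1‖ ‖p.2‖) → μ A < ⊤) :
    (μ {p : H × H | s < Np p}).toReal ≤ ∫ p, Ff r s p ∂μ := by
  have hSfin : μ {p : H × H | s < Np p} < ⊤ :=
    hfin _ (measurableSet_Np_gt s) ⟨s, by linarith, fun p hp => le_of_lt (by simpa [Np] using hp)⟩
  have h1 : ∫ p, Set.indicator {p : H × H | s < Np p} (fun _ => (1:ℝ)) p ∂μ
      ≤ ∫ p, Ff r s p ∂μ := by
    apply integral_mono (indicator_one_integrable (measurableSet_Np_gt s) hSfin)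
      (Ff_integrable hr hrs hfin)
    intro p
    rw [Set.indicator_apply]
    split_ifs with h
    · exact le_of_eq (Ff_eq_one hrs (le_of_lt (by simpa using h))).symm
    · exact Ff_nonneg r s p
  rwa [integral_indicator_const (1:ℝ) (measurableSet_Np_gt s), smul_eq_mul, mul_one] at h1

lemma tendsto_nU (hX : Measurable X) (hY : Measurable Y) (hα : 0 < α)
    (hbpos : ∀ n, 0 < b n)
    (hfin : ∀ A : Set (H × H), MeasurableSet A →
      (∃ ε : ℝ, 0 < ε ∧ ∀ p ∈ A, ε ≤ max ‖p.1‖ ‖p.2‖) → μ A < ⊤)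
    (hmu : ∀ r : ℝ, 0 < r → μ {p : H × H | r < Np p} = ENNReal.ofReal (r ^ (-α)))
    (hM0 : ∀ f : H × H → ℝ, Continuous f → (∃ C : ℝ, ∀ p, |f p| ≤ C) →
      (∃ ε : ℝ, 0 < ε ∧ ∀ p : H × H, max ‖p.1‖ ‖p.2‖ < ε → f p = 0) →
      Tendsto (fun n : ℕ =>
          (n : ℝ) * ∫ ω, f ((b n)⁻¹ • X ω, (b n)⁻¹ • Y ω) ∂P) atTop
        (𝓝 (∫ p, f p ∂μ)))
    {t : ℝ} (ht : 0 < t) :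
    Tendsto (fun n : ℕ => (n:ℝ) * (P {ω | t * b n < max ‖X ω‖ ‖Y ω‖}).toReal) atTop
      (𝓝 (t ^ (-α))) := by
  have hTm : Measurable fun ω => max ‖X ω‖ ‖Y ω‖ := hX.norm.max hY.norm
  have hZm : ∀ n : ℕ, Measurable fun ω => ((b n)⁻¹ • X ω, (b n)⁻¹ • Y ω) :=
    fun n => (hX.const_smul _).prodMk (hY.const_smul _)
  have hSm : ∀ n : ℕ, MeasurableSet {ω | t * b n < max ‖X ω‖ ‖Y ω‖} :=
    fun n => measurableSet_lt measurable_const hTm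
  have hNpZ : ∀ n : ℕ, ∀ ω, Np ((b n)⁻¹ • X ω, (b n)⁻¹ • Y ω)
      = (b n)⁻¹ * max ‖X ω‖ ‖Y ω‖ := by
    intro n ω
    have : ((b n)⁻¹ • X ω, (b n)⁻¹ • Y ω) = (b n)⁻¹ • (X ω, Y ω) := rfl
    rw [this, Np_smul (inv_nonneg.mpr (hbpos n).le)]
    rfl
  have hFfint : ∀ (r s : ℝ) (n : ℕ), Integrable (fun ω => Ff r s ((b n)⁻¹ • X ω, (b n)⁻¹ • Y ω)) P := by
    intro r s n
    refine Integrable.mono' (integrable_const 1)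
      ((Ff_cont r s).comp_aestronglyMeasurable (hZm n).aestronglyMeasurable) ?_
    filter_upwards with ω
    rw [Real.norm_eq_abs, abs_of_nonneg (Ff_nonneg _ _ _)]
    exact Ff_le_one _ _ _
  have hindint : ∀ n : ℕ, Integrable (Set.indicator {ω | t * b n < max ‖X ω‖ ‖Y ω‖}
      (fun _ => (1:ℝ))) P := by
    intro n
    rw [integrable_indicator_iff (hSm n)]
    exact integrableOn_const (measure_ne_top _ _)
  have hPtoInt : ∀ n : ℕ, (P {ω | t * b n < max ‖X ω‖ ‖Y ω‖}).toReal
      = ∫ ω, Set.indicator {ω | t * b n < max ‖X ω‖ ‖Y ω‖} (fun _ => (1:ℝ)) ω ∂P := by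
    intro n
    rw [integral_indicator_const (1:ℝ) (hSm n), smul_eq_mul, mul_one, measureReal_def]
  -- E-side comparisons
  have hEub : ∀ r : ℝ, 0 < r → r < t → ∀ n : ℕ,
      (P {ω | t * b n < max ‖X ω‖ ‖Y ω‖}).toReal
        ≤ ∫ ω, Ff r t ((b n)⁻¹ • X ω, (b n)⁻¹ • Y ω) ∂P := by
    intro r hr hrt n
    rw [hPtoInt n]
    apply integral_mono (hindint n) (hFfint r t n)
    intro ω
    rw [Set.indicator_apply]
    split_ifs with h
    · refine le_of_eq (Ff_eq_one hrt ?_).symm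
      rw [hNpZ n ω]
      have h' : t * b n < max ‖X ω‖ ‖Y ω‖ := by simpa using h
      rw [le_inv_mul_iff₀ (hbpos n)]
      linarith [h']
    · exact Ff_nonneg _ _ _
  have hElb : ∀ s : ℝ, t < s → ∀ n : ℕ,
      ∫ ω, Ff t s ((b n)⁻¹ • X ω, (b n)⁻¹ • Y ω) ∂P
        ≤ (P {ω | t * b n < max ‖X ω‖ ‖Y ω‖}).toReal := by
    intro s hts n
    rw [hPtoInt n]
    apply integral_mono (hFfint t s n) (hindint n)
    intro ω
    rw [Set.indicator_apply]
    split_ifs with h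
    · exact Ff_le_one _ _ _
    · refine le_of_eq (Ff_eq_zero hts ?_)
      rw [hNpZ n ω]
      have h' : ¬ (t * b n < max ‖X ω‖ ‖Y ω‖) := by simpa using h
      rw [inv_mul_le_iff₀ (hbpos n)]
      push_neg at h'
      linarith [h']
  have hrpow_cont : ContinuousAt (fun s : ℝ => s ^ (-α)) t :=
    Real.continuousAt_rpow_const t (-α) (Or.inl ht.ne')
  refine tendsto_order.2 ⟨fun c hc => ?_, fun c hc => ?_⟩
  · -- c < t^(-α) : lower bound branch
    have hev := hrpow_cont.tendsto.eventually (eventually_gt_nhds hc)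
    obtain ⟨δ₀, hδ₀, hδ⟩ := Metric.eventually_nhds_iff.mp hev
    set s : ℝ := t + δ₀/2 with hsdef
    have hts : t < s := by rw [hsdef]; linarith
    have hcs : c < s ^ (-α) := hδ (by
      rw [Real.dist_eq, hsdef]
      rw [abs_of_nonneg (by linarith : (0:ℝ) ≤ t + δ₀/2 - t)]
      linarith)
    have hlim := hM0 (Ff t s) (Ff_cont t s)
      ⟨1, fun p => by rw [abs_of_nonneg (Ff_nonneg _ _ _)]; exact Ff_le_one _ _ _⟩
      ⟨t, ht, fun p hp => Ff_eq_zero hts (le_of_lt (by simpa [Np] using hp))⟩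
    have hIlb : c < ∫ p, Ff t s p ∂μ := by
      have h1 := le_integral_Ff ht hts hfin (μ := μ)
      rw [hmu s (by linarith)] at h1
      rw [ENNReal.toReal_ofReal (Real.rpow_nonneg (by linarith) _)] at h1
      linarith
    have hev2 := hlim.eventually (eventually_gt_nhds hIlb)
    filter_upwards [hev2] with n hn
    calc c < (n:ℝ) * ∫ ω, Ff t s ((b n)⁻¹ • X ω, (b n)⁻¹ • Y ω) ∂P := hn
    _ ≤ (n:ℝ) * (P {ω | t * b n < max ‖X ω‖ ‖Y ω‖}).toReal :=
        mul_le_mul_of_nonneg_left (hElb s hts n) (Nat.cast_nonneg n)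
  · -- t^(-α) < c : upper bound branch
    have hev := hrpow_cont.tendsto.eventually (eventually_lt_nhds hc)
    obtain ⟨δ₀, hδ₀, hδ⟩ := Metric.eventually_nhds_iff.mp hev
    set r : ℝ := max (t/2) (t - δ₀/2) with hrdef
    have hr0 : 0 < r := lt_of_lt_of_le (by linarith) (le_max_left _ _)
    have hrt : r < t := by
      rw [hrdef]
      apply max_lt (by linarith) (by linarith)
    have hcr : r ^ (-α) < c := hδ (by
      rw [Real.dist_eq, abs_of_nonpos (by
        apply sub_nonpos.mpr
        exact le_of_lt hrt)]
      rw [hrdef]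
      have : t - δ₀/2 ≤ max (t/2) (t - δ₀/2) := le_max_right _ _
      linarith)
    have hlim := hM0 (Ff r t) (Ff_cont r t)
      ⟨1, fun p => by rw [abs_of_nonneg (Ff_nonneg _ _ _)]; exact Ff_le_one _ _ _⟩
      ⟨r, hr0, fun p hp => Ff_eq_zero hrt (le_of_lt (by simpa [Np] using hp))⟩
    have hIub : ∫ p, Ff r t p ∂μ < c := by
      have h1 := integral_Ff_le hr0 hrt hfin (μ := μ)
      rw [hmu r hr0] at h1
      rw [ENNReal.toReal_ofReal (Real.rpow_nonneg hr0.le _)] at h1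
      linarith
    have hev2 := hlim.eventually (eventually_lt_nhds hIub)
    filter_upwards [hev2] with n hn
    calc (n:ℝ) * (P {ω | t * b n < max ‖X ω‖ ‖Y ω‖}).toReal
        ≤ (n:ℝ) * ∫ ω, Ff r t ((b n)⁻¹ • X ω, (b n)⁻¹ • Y ω) ∂P :=
        mul_le_mul_of_nonneg_left (hEub r hr0 hrt n) (Nat.cast_nonneg n)
    _ < c := hn

end Hilbert2

lemma two_rpow_sub_two (lam : ℝ) : (2:ℝ)^((2:ℝ)-lam) = 4 * 2^(-lam) := by
  rw [sub_eq_add_neg, Real.rpow_add (by norm_num : (0:ℝ) < 2)]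
  congr 1
  rw [show (2:ℝ) = ((2:ℕ):ℝ) by norm_num, Real.rpow_natCast]
  norm_num

lemma two_rpow_sub_lt_one {lam : ℝ} (hlam : 2 < lam) : (2:ℝ)^((2:ℝ)-lam) < 1 :=
  Real.rpow_lt_one_of_one_lt_of_neg (by norm_num) (by linarith)

/-- Empirical truncated-second-moment bound via Potter-type estimate. -/
lemma empirical_tail {Ω : Type*} [MeasurableSpace Ω] (P : Measure Ω) [IsProbabilityMeasure P]
    {T : Ω → ℝ} (hT : Measurable T) {lam C y₀ : ℝ} (hlam : 2 < lam) (hC : 0 < C)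
    (hpot : ∀ t y, 1 ≤ t → y₀ ≤ y →
      (P {ω | t*y < T ω}).toReal ≤ C * t^(-lam) * (P {ω | y < T ω}).toReal)
    {v K : ℝ} (hv : y₀ ≤ v) (hvpos : 0 < v) (hK : 1 ≤ K) :
    ∫ ω, Set.indicator {ω | K < v⁻¹ * T ω} (fun ω => (v⁻¹ * T ω)^2) ω ∂P
      ≤ (4 * C * (1 - (2:ℝ)^((2:ℝ)-lam))⁻¹ * K^((2:ℝ)-lam)) * (P {ω | v < T ω}).toReal := by
  set W : Ω → ℝ := fun ω => v⁻¹ * T ω with hW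
  have hWm : Measurable W := hT.const_mul _
  have hKpos : (0:ℝ) < K := by linarith
  set q : ℝ := (2:ℝ)^((2:ℝ)-lam) with hq
  have hq0 : 0 ≤ q := Real.rpow_nonneg (by norm_num) _
  have hq1 : q < 1 := two_rpow_sub_lt_one hlam
  have hUnn : (0:ℝ) ≤ (P {ω | v < T ω}).toReal := ENNReal.toReal_nonneg
  -- the function is nonneg and measurable
  have hfm : Measurable fun ω => Set.indicator {ω | K < W ω} (fun ω => (W ω)^2) ω :=
    Measurable.indicator (hWm.pow_const 2) (measurableSet_lt measurable_const hWm)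
  have hfnn : ∀ ω, 0 ≤ Set.indicator {ω | K < W ω} (fun ω => (W ω)^2) ω := by
    intro ω
    exact Set.indicator_nonneg (fun ω _ => sq_nonneg _) ω
  rw [integral_eq_lintegral_of_nonneg_ae (Filter.Eventually.of_forall hfnn)
    hfm.aestronglyMeasurable]
  have h1q : (0:ℝ) ≤ (1 - q)⁻¹ := inv_nonneg.mpr (by linarith)
  have hKe : (0:ℝ) ≤ K^((2:ℝ)-lam) := Real.rpow_nonneg (by linarith) _
  apply ENNReal.toReal_le_of_le_ofReal
    (mul_nonneg (mul_nonneg (mul_nonneg (by linarith) h1q) hKe) hUnn)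
  have hofeq : ∀ ω, ENNReal.ofReal (Set.indicator {ω | K < W ω} (fun ω => (W ω)^2) ω)
      = Set.indicator {ω | K < W ω} (fun ω => ENNReal.ofReal ((W ω)^2)) ω := by
    intro ω
    rw [Set.indicator_apply, Set.indicator_apply]
    split_ifs <;> simp
  calc ∫⁻ ω, ENNReal.ofReal (Set.indicator {ω | K < W ω} (fun ω => (W ω)^2) ω) ∂P
      = ∫⁻ ω, Set.indicator {ω | K < W ω} (fun ω => ENNReal.ofReal ((W ω)^2)) ω ∂P := by
        exact lintegral_congr hofeq
  _ ≤ ∑' j : ℕ, ENNReal.ofReal (4 * ((2:ℝ)^j * K)^2) * P {ω | (2:ℝ)^j * K < W ω} :=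
      lintegral_tail_bound P hWm hKpos
  _ ≤ ∑' j : ℕ, ENNReal.ofReal ((4 * C * (P {ω | v < T ω}).toReal * K^((2:ℝ)-lam)) * q^j) := by
      refine ENNReal.tsum_le_tsum fun j => ?_
      have haj : (0:ℝ) < (2:ℝ)^j * K := by positivity
      have haj1 : (1:ℝ) ≤ (2:ℝ)^j * K :=
        one_le_mul_of_one_le_of_one_le (one_le_pow₀ (by norm_num)) hK
      have hset : {ω | (2:ℝ)^j * K < W ω} = {ω | ((2:ℝ)^j * K) * v < T ω} := by
        ext ω
        simp only [Set.mem_setOf_eq, hW]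
        rw [lt_inv_mul_iff₀ hvpos, mul_comm]
      have hP : P {ω | (2:ℝ)^j * K < W ω}
          = ENNReal.ofReal ((P {ω | ((2:ℝ)^j * K) * v < T ω}).toReal) := by
        rw [hset, ENNReal.ofReal_toReal (measure_ne_top _ _)]
      rw [hP, ← ENNReal.ofReal_mul (by positivity)]
      apply ENNReal.ofReal_le_ofReal
      have hb := hpot ((2:ℝ)^j * K) v haj1 hv
      calc 4 * ((2:ℝ)^j * K)^2 * (P {ω | ((2:ℝ)^j * K) * v < T ω}).toReal
          ≤ 4 * ((2:ℝ)^j * K)^2 * (C * ((2:ℝ)^j * K)^(-lam) * (P {ω | v < T ω}).toReal) := by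
            apply mul_le_mul_of_nonneg_left hb (by positivity)
      _ = (4 * C * (P {ω | v < T ω}).toReal) * (((2:ℝ)^j * K)^2 * ((2:ℝ)^j * K)^(-lam)) := by
            ring
      _ = (4 * C * (P {ω | v < T ω}).toReal) * (((2:ℝ)^j * K)^((2:ℝ)-lam)) := by
            rw [sq_rpow_cancel haj lam]
      _ = (4 * C * (P {ω | v < T ω}).toReal * K^((2:ℝ)-lam)) * q^j := by
            rw [rpow_dyadic j ((2:ℝ)-lam) hKpos, hq]
            ring
  _ = ENNReal.ofReal ((4 * C * (P {ω | v < T ω}).toReal * K^((2:ℝ)-lam)) * (1-q)⁻¹) :=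
      geom_ofReal_tsum (by positivity) hq0 hq1
  _ ≤ ENNReal.ofReal ((4 * C * (1 - q)⁻¹ * K^((2:ℝ)-lam)) * (P {ω | v < T ω}).toReal) := by
      apply ENNReal.ofReal_le_ofReal
      apply le_of_eq
      ring

/-- Finite second moment from the Potter-type bound. -/
lemma empirical_sq_integrable {Ω : Type*} [MeasurableSpace Ω] (P : Measure Ω)
    [IsProbabilityMeasure P] {T : Ω → ℝ} (hT : Measurable T) (hTnn : ∀ ω, 0 ≤ T ω)
    {lam C y₀ : ℝ} (hlam : 2 < lam) (hC : 0 < C) (hy₀ : 0 < y₀)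
    (hpot : ∀ t y, 1 ≤ t → y₀ ≤ y →
      (P {ω | t*y < T ω}).toReal ≤ C * t^(-lam) * (P {ω | y < T ω}).toReal) :
    Integrable (fun ω => T ω ^ 2) P := by
  set q : ℝ := (2:ℝ)^((2:ℝ)-lam) with hq
  have hq0 : 0 ≤ q := Real.rpow_nonneg (by norm_num) _
  have hq1 : q < 1 := two_rpow_sub_lt_one hlam
  refine ⟨(hT.pow_const 2).aestronglyMeasurable, ?_⟩
  rw [hasFiniteIntegral_iff_ofReal (Filter.Eventually.of_forall fun ω => sq_nonneg _)]
  have hpt : ∀ ω, ENNReal.ofReal (T ω ^ 2) ≤ ENNReal.ofReal (y₀^2)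
      + Set.indicator {ω | y₀ < T ω} (fun ω => ENNReal.ofReal ((T ω)^2)) ω := by
    intro ω
    rcases le_or_gt (T ω) y₀ with h | h
    · refine le_trans (ENNReal.ofReal_le_ofReal ?_) le_self_add
      nlinarith [hTnn ω]
    · rw [Set.indicator_of_mem (show ω ∈ {ω | y₀ < T ω} from h)]
      exact le_add_self
  calc ∫⁻ ω, ENNReal.ofReal (T ω ^ 2) ∂P
      ≤ ∫⁻ ω, (ENNReal.ofReal (y₀^2)
        + Set.indicator {ω | y₀ < T ω} (fun ω => ENNReal.ofReal ((T ω)^2)) ω) ∂P :=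
        lintegral_mono hpt
  _ = ENNReal.ofReal (y₀^2) * P Set.univ
      + ∫⁻ ω, Set.indicator {ω | y₀ < T ω} (fun ω => ENNReal.ofReal ((T ω)^2)) ω ∂P := by
        rw [lintegral_add_right _ (Measurable.indicator
          ((hT.pow_const 2).ennreal_ofReal) (measurableSet_lt measurable_const hT))]
        rw [lintegral_const]
  _ < ⊤ := by
        rw [ENNReal.add_lt_top]
        constructor
        · exact ENNReal.mul_lt_top ENNReal.ofReal_lt_top (measure_lt_top _ _)
        · refine lt_of_le_of_lt (lintegral_tail_bound P hT hy₀) ?_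
          have hterm : ∀ j : ℕ, ENNReal.ofReal (4 * ((2:ℝ)^j * y₀)^2) * P {ω | (2:ℝ)^j * y₀ < T ω}
              ≤ ENNReal.ofReal ((4 * C * y₀^2) * q^j) := by
            intro j
            have h2j : (1:ℝ) ≤ (2:ℝ)^j := one_le_pow₀ (by norm_num)
            have hb := hpot ((2:ℝ)^j) y₀ h2j le_rfl
            have hU1 : (P {ω | y₀ < T ω}).toReal ≤ 1 := by
              rw [← ENNReal.toReal_one]
              exact ENNReal.toReal_mono ENNReal.one_ne_top prob_le_one
            have hP : P {ω | (2:ℝ)^j * y₀ < T ω}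
                = ENNReal.ofReal ((P {ω | (2:ℝ)^j * y₀ < T ω}).toReal) :=
              (ENNReal.ofReal_toReal (measure_ne_top _ _)).symm
            rw [hP, ← ENNReal.ofReal_mul (by positivity)]
            apply ENNReal.ofReal_le_ofReal
            have hrj : ((2:ℝ)^j)^(-lam) = ((2:ℝ)^(-lam))^j := by
              have := rpow_dyadic j (-lam) (one_pos)
              simpa using this
            have h4 : ((2:ℝ)^j)^2 = (4:ℝ)^j := by
              rw [← pow_mul, mul_comm j 2, pow_mul]
              norm_num
            have hq' : (4:ℝ) * ((2:ℝ)^j)^2 * (C * ((2:ℝ)^j)^(-lam)) = 4 * C * q^j := by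
              rw [hrj, hq, two_rpow_sub_two lam, mul_pow, h4]
              ring
            calc 4 * ((2:ℝ)^j * y₀)^2 * (P {ω | (2:ℝ)^j * y₀ < T ω}).toReal
                ≤ 4 * ((2:ℝ)^j * y₀)^2 * (C * ((2:ℝ)^j)^(-lam) * (P {ω | y₀ < T ω}).toReal) := by
                  apply mul_le_mul_of_nonneg_left hb (by positivity)
            _ ≤ 4 * ((2:ℝ)^j * y₀)^2 * (C * ((2:ℝ)^j)^(-lam) * 1) := by
                  have hcc : (0:ℝ) ≤ C * ((2:ℝ)^j)^(-lam) := by positivity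
                  apply mul_le_mul_of_nonneg_left _ (by positivity)
                  exact mul_le_mul_of_nonneg_left hU1 hcc
            _ = (4 * ((2:ℝ)^j)^2 * (C * ((2:ℝ)^j)^(-lam))) * y₀^2 := by ring
            _ = (4 * C * q^j) * y₀^2 := by rw [hq']
            _ = (4 * C * y₀^2) * q^j := by ring
          refine lt_of_le_of_lt (ENNReal.tsum_le_tsum hterm) ?_
          rw [geom_ofReal_tsum (by positivity) hq0 hq1]
          exact ENNReal.ofReal_lt_top

section Hilbert3
variable {H : Type*} [NormedAddCommGroup H] [InnerProductSpace ℝ H]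
    [SecondCountableTopology H] [MeasurableSpace H] [BorelSpace H]

/-- μ-side second moment integrability on the region away from the origin. -/
lemma mu_sq_integrableOn {α : ℝ} (hα : 2 < α) {μ : Measure (H × H)}
    (hmu : ∀ r : ℝ, 0 < r → μ {p : H × H | r < Np p} = ENNReal.ofReal (r ^ (-α)))
    {r : ℝ} (hr : 0 < r) :
    IntegrableOn (fun p : H × H => Np p ^ 2) {p : H × H | r < Np p} μ := by
  set q : ℝ := (2:ℝ)^((2:ℝ)-α) with hq
  have hq0 : 0 ≤ q := Real.rpow_nonneg (by norm_num) _
  have hq1 : q < 1 := two_rpow_sub_lt_one hα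
  refine ⟨(continuous_Np.pow 2).aestronglyMeasurable.restrict, ?_⟩
  rw [hasFiniteIntegral_iff_ofReal (Filter.Eventually.of_forall fun p => sq_nonneg _)]
  rw [← lintegral_indicator (measurableSet_Np_gt r)]
  refine lt_of_le_of_lt (lintegral_tail_bound μ continuous_Np.measurable hr) ?_
  have hterm : ∀ j : ℕ, ENNReal.ofReal (4 * ((2:ℝ)^j * r)^2) * μ {p : H × H | (2:ℝ)^j * r < Np p}
      ≤ ENNReal.ofReal ((4 * r^((2:ℝ)-α)) * q^j) := by
    intro j
    have haj : (0:ℝ) < (2:ℝ)^j * r := by positivity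
    rw [hmu _ haj, ← ENNReal.ofReal_mul (by positivity)]
    apply ENNReal.ofReal_le_ofReal
    apply le_of_eq
    calc 4 * ((2:ℝ)^j * r)^2 * ((2:ℝ)^j * r) ^ (-α)
        = 4 * (((2:ℝ)^j * r)^2 * ((2:ℝ)^j * r) ^ (-α)) := by ring
    _ = 4 * ((2:ℝ)^j * r)^((2:ℝ)-α) := by rw [sq_rpow_cancel haj α]
    _ = (4 * r^((2:ℝ)-α)) * q^j := by
        rw [rpow_dyadic j ((2:ℝ)-α) hr, hq]
        ring
  refine lt_of_le_of_lt (ENNReal.tsum_le_tsum hterm) ?_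
  rw [geom_ofReal_tsum (by positivity) hq0 hq1]
  exact ENNReal.ofReal_lt_top

end Hilbert3

lemma ratio_le {α : ℝ} (hα : 0 < α) {b : ℕ → ℝ}
    {U : ℝ → ℝ} (hanti : Antitone U) (hUpos : ∀ x, 0 ≤ U x)
    (hU : ∀ t : ℝ, 0 < t → Tendsto (fun n : ℕ => (n:ℝ) * U (t * b n)) atTop (𝓝 (t ^ (-α))))
    {ε : ℝ} (hε : 0 < ε) : ∀ᶠ n in atTop, b (n+1) ≤ (1+ε) * b n := by
  set L : ℝ := (1+ε) ^ (-α) with hLdef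
  have hL1 : L < 1 := by
    have := Real.rpow_lt_one_of_one_lt_of_neg (by linarith : (1:ℝ) < 1+ε) (by linarith : -α < 0)
    simpa [hLdef] using this
  have hL0 : 0 < L := Real.rpow_pos_of_pos (by linarith) _
  set η : ℝ := (1 - L)/8 with hηdef
  have hη : 0 < η := by rw [hηdef]; linarith
  have h1 : Tendsto (fun n : ℕ => ((n:ℝ)+1) * U (b (n+1))) atTop (𝓝 1) := by
    have := (hU 1 one_pos).comp (tendsto_add_atTop_nat 1)
    simp only [Function.comp_def, one_mul, Real.one_rpow] at this
    refine this.congr fun n => ?_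
    push_cast
    ring
  have h2 := hU (1+ε) (by linarith)
  by_contra hcon
  rw [Filter.not_eventually] at hcon
  have hev : ∀ᶠ n : ℕ in atTop, (1 - η < ((n:ℝ)+1) * U (b (n+1))) ∧
      ((n:ℝ) * U ((1+ε) * b n) < L + η) ∧ (1/η ≤ (n:ℝ)) ∧ (1 ≤ (n:ℝ)) := by
    filter_upwards [h1.eventually (eventually_gt_nhds (by linarith : 1 - η < 1)),
      h2.eventually (eventually_lt_nhds (by linarith : L < L + η)),
      eventually_ge_atTop (⌈1/η⌉₊), eventually_ge_atTop 1] with n ha hb' hn hn1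
    exact ⟨ha, hb', le_trans (Nat.le_ceil _) (by exact_mod_cast hn), by exact_mod_cast hn1⟩
  obtain ⟨n, hlt, h1n, h2n, hn, hn1⟩ := (hcon.and_eventually hev).exists
  push_neg at hlt
  have hU1 : U (b (n+1)) ≤ U ((1+ε) * b n) := hanti hlt.le
  set V := U ((1+ε) * b n) with hV
  have hnpos : (0:ℝ) < n := by linarith
  have hVn : V ≤ (L + η) * η := by
    have h3 : (n:ℝ) * V < L + η := h2n
    have h4 : 1 ≤ η * n := by
      rw [div_le_iff₀ hη] at hn
      linarith [hn]
    nlinarith [hUpos ((1+ε) * b n)]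
  have hchain : 1 - η < (n:ℝ) * V + V := by
    calc 1 - η < ((n:ℝ)+1) * U (b (n+1)) := h1n
    _ ≤ ((n:ℝ)+1) * V := by nlinarith [hU1]
    _ = (n:ℝ) * V + V := by ring
  nlinarith

variable {α : ℝ} {b : ℕ → ℝ} {U : ℝ → ℝ}

lemma doubling (hα : 0 < α) (hbpos : ∀ n, 0 < b n)
    (hb : Tendsto b atTop atTop) (hanti : Antitone U) (hUpos : ∀ x, 0 ≤ U x)
    (hU : ∀ t : ℝ, 0 < t → Tendsto (fun n : ℕ => (n:ℝ) * U (t * b n)) atTop (𝓝 (t ^ (-α))))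
    {ρ : ℝ} (hρ1 : ρ ≤ 1) (hρ : (2:ℝ) ^ (-α) < ρ) :
    ∃ y₀ : ℝ, 0 < y₀ ∧ ∀ y, y₀ ≤ y → U (2*y) ≤ ρ * U y := by
  have hρ0 : 0 < ρ := lt_of_le_of_lt (Real.rpow_nonneg (by norm_num) _) hρ
  set A : ℝ := (2:ℝ) ^ (-α) with hA
  have hA0 : 0 < A := Real.rpow_pos_of_pos (by norm_num) _
  set θ : ℝ := (A/ρ + 1)/2 with hθdef
  have hAρ : A/ρ < 1 := (div_lt_one hρ0).mpr hρ
  have hθ1 : θ < 1 := by rw [hθdef]; linarith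
  have hθA : A/ρ < θ := by rw [hθdef]; linarith
  have hθ0 : 0 < θ := by
    have : 0 < A/ρ := div_pos hA0 hρ0
    rw [hθdef]; linarith
  obtain ⟨ε, hε0, hεθ⟩ : ∃ ε : ℝ, 0 < ε ∧ θ < (1+ε) ^ (-α) := by
    have hc : ContinuousAt (fun s : ℝ => (1+s) ^ (-α)) 0 := by
      have h1 : ContinuousAt (fun x : ℝ => x ^ (-α)) ((fun s : ℝ => 1 + s) 0) := by
        apply Real.continuousAt_rpow_const
        norm_num
      exact h1.comp (by fun_prop)
    have h2 : Tendsto (fun s : ℝ => (1+s) ^ (-α)) (𝓝 0) (𝓝 1) := by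
      simpa using hc.tendsto
    have h3 := h2.eventually (eventually_gt_nhds hθ1)
    obtain ⟨δ, hδ0, hδ⟩ := Metric.eventually_nhds_iff.mp h3
    refine ⟨δ/2, by linarith, hδ ?_⟩
    rw [Real.dist_eq]
    rw [abs_of_pos (by linarith : (0:ℝ) < δ/2 - 0)]
    linarith
  set η : ℝ := (ρ*θ - A)/(1+ρ) with hηdef
  have hρθA : A < ρ * θ := by
    have := (div_lt_iff₀ hρ0).mp hθA
    linarith [this]
  have hη0 : 0 < η := div_pos (by linarith) (by linarith)
  have hmul : η * (1+ρ) = ρ*θ - A := by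
    rw [hηdef]; field_simp
  have hkey : A + η ≤ ρ * ((1+ε) ^ (-α) - η) := by
    have h5 : ρ * θ ≤ ρ * ((1+ε)^(-α)) := mul_le_mul_of_nonneg_left hεθ.le hρ0.le
    have hexp : ρ * ((1+ε)^(-α) - η) = ρ*((1+ε)^(-α)) - ρ*η := by ring
    linarith
  have E1 := (hU 2 (by norm_num)).eventually (eventually_lt_nhds (by linarith : A < A + η))
  have E2 := (hU (1+ε) (by linarith)).eventually
    (eventually_gt_nhds (by linarith : (1+ε)^(-α) - η < (1+ε)^(-α)))
  have E3 := ratio_le hα hanti hUpos hU hε0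
  obtain ⟨N, hN⟩ := ((E1.and (E2.and E3)).and (eventually_ge_atTop 1)).exists_forall_of_atTop
  refine ⟨max 1 (b (N+1)), by positivity, fun y hy => ?_⟩
  have hy1 : b (N+1) ≤ y := le_trans (le_max_right _ _) hy
  obtain ⟨M₀, hM₀⟩ := (hb.eventually_gt_atTop y).exists_forall_of_atTop
  set M := max (N+1) M₀ with hM
  classical
  set m := Nat.findGreatest (fun k => b k ≤ y) M with hmdef
  have hwit : N+1 ≤ M := le_max_left _ _
  have hm1 : N+1 ≤ m := Nat.le_findGreatest (P := fun k => b k ≤ y) hwit hy1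
  have hbm : b m ≤ y := by
    have := Nat.findGreatest_spec (P := fun k => b k ≤ y) hwit hy1
    simpa [hmdef] using this
  have hbm1 : y < b (m+1) := by
    by_cases h : m+1 ≤ M
    · have := Nat.findGreatest_is_greatest (P := fun k => b k ≤ y) (n := M) (k := m+1)
        (by omega) h
      simpa [hmdef] using not_le.mp (by simpa using this)
    · exact hM₀ _ (by omega)
  obtain ⟨⟨hE1m, hE2m, hE3m⟩, hm01⟩ := hN m (by omega)
  have hmpos : (0:ℝ) < (m:ℝ) := by exact_mod_cast (by omega : 0 < m)
  have s1 : U (2*y) ≤ U (2 * b m) := hanti (by linarith)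
  have s4 : U ((1+ε) * b m) ≤ U y := hanti (by linarith)
  have chain : (m:ℝ) * U (2*y) ≤ (m:ℝ) * (ρ * U y) := by
    calc (m:ℝ) * U (2*y) ≤ (m:ℝ) * U (2 * b m) := mul_le_mul_of_nonneg_left s1 hmpos.le
    _ ≤ A + η := hE1m.le
    _ ≤ ρ * ((1+ε) ^ (-α) - η) := hkey
    _ ≤ ρ * ((m:ℝ) * U ((1+ε) * b m)) := mul_le_mul_of_nonneg_left hE2m.le hρ0.le
    _ = (m:ℝ) * (ρ * U ((1+ε) * b m)) := by ring
    _ ≤ (m:ℝ) * (ρ * U y) :=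
      mul_le_mul_of_nonneg_left (mul_le_mul_of_nonneg_left s4 hρ0.le) hmpos.le
  exact le_of_mul_le_mul_left chain hmpos

lemma potter (hα : 2 < α) (hbpos : ∀ n, 0 < b n)
    (hb : Tendsto b atTop atTop) (hanti : Antitone U) (hUpos : ∀ x, 0 ≤ U x)
    (hU : ∀ t : ℝ, 0 < t → Tendsto (fun n : ℕ => (n:ℝ) * U (t * b n)) atTop (𝓝 (t ^ (-α)))) :
    ∃ (lam C y₀ : ℝ), 2 < lam ∧ 0 < C ∧ 0 < y₀ ∧
      ∀ t y, 1 ≤ t → y₀ ≤ y → U (t*y) ≤ C * t ^ (-lam) * U y := by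
  set lam : ℝ := (α + 2)/2 with hlamdef
  have hlam2 : 2 < lam := by rw [hlamdef]; linarith
  have hlamα : lam < α := by rw [hlamdef]; linarith
  have hlam0 : 0 < lam := by linarith
  have hρ : (2:ℝ)^(-α) < 2^(-lam) :=
    Real.rpow_lt_rpow_of_exponent_lt one_lt_two (by linarith)
  have hρ1 : (2:ℝ)^(-lam) ≤ 1 :=
    Real.rpow_le_one_of_one_le_of_nonpos one_le_two (by linarith)
  have hρnn : (0:ℝ) ≤ 2^(-lam) := Real.rpow_nonneg (by norm_num) _
  obtain ⟨y₀, hy₀, hdb⟩ := doubling (by linarith) hbpos hb hanti hUpos hU hρ1 hρ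
  have hiter : ∀ k : ℕ, ∀ y, y₀ ≤ y → U ((2:ℝ)^k * y) ≤ ((2:ℝ)^(-lam))^k * U y := by
    intro k
    induction k with
    | zero => intro y _; simp
    | succ k ih =>
      intro y hy
      have hypos : 0 < y := lt_of_lt_of_le hy₀ hy
      have h2k : y₀ ≤ (2:ℝ)^k * y :=
        le_trans hy (le_mul_of_one_le_left hypos.le (one_le_pow₀ (by norm_num : (1:ℝ) ≤ 2)))
      have heq : (2:ℝ)^(k+1) * y = 2 * ((2:ℝ)^k * y) := by ring
      calc U ((2:ℝ)^(k+1) * y) = U (2 * ((2:ℝ)^k * y)) := by rw [heq]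
      _ ≤ 2^(-lam) * U ((2:ℝ)^k * y) := hdb _ h2k
      _ ≤ 2^(-lam) * (((2:ℝ)^(-lam))^k * U y) := mul_le_mul_of_nonneg_left (ih y hy) hρnn
      _ = ((2:ℝ)^(-lam))^(k+1) * U y := by ring
  refine ⟨lam, 2^lam, y₀, hlam2, Real.rpow_pos_of_pos two_pos lam, hy₀, fun t y ht hy => ?_⟩
  have hypos : 0 < y := lt_of_lt_of_le hy₀ hy
  have hC1 : (1:ℝ) ≤ 2^lam := Real.one_le_rpow (by norm_num) (by linarith)
  rcases eq_or_lt_of_le ht with rfl|ht1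
  · rw [one_mul, Real.one_rpow, mul_one]
    exact le_mul_of_one_le_left (hUpos y) hC1
  · obtain ⟨j, hj1, hj2⟩ := exists_dyadic_up ht1
    have key : ((2:ℝ)^(-lam))^j ≤ 2^lam * t^(-lam) := by
      have e1 : ((2:ℝ)^(-lam))^j = (2:ℝ)^(-lam * j) := by
        rw [Real.rpow_mul (by norm_num : (0:ℝ) ≤ 2), Real.rpow_natCast]
      have e2 : ((2:ℝ)^(j+1:ℕ)) ^ (-lam) = (2:ℝ)^(-lam * (j+1:ℕ)) := by
        rw [← Real.rpow_natCast 2 (j+1), ← Real.rpow_mul (by norm_num : (0:ℝ) ≤ 2)]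
        ring_nf
      have e3 : ((2:ℝ)^(j+1:ℕ)) ^ (-lam) ≤ t^(-lam) :=
        Real.rpow_le_rpow_of_nonpos (by linarith) hj2 (by linarith)
      have e4 : (2:ℝ)^lam * (2:ℝ)^(-lam * (j+1:ℕ)) = (2:ℝ)^(-lam * j) := by
        rw [← Real.rpow_add (by norm_num : (0:ℝ) < 2)]
        push_cast
        ring_nf
      rw [e1, ← e4]
      have := mul_le_mul_of_nonneg_left (e2 ▸ e3) (Real.rpow_nonneg (by norm_num : (0:ℝ) ≤ 2) lam)
      exact this
    have h1 : U (t*y) ≤ U ((2:ℝ)^j * y) := hanti (mul_le_mul_of_nonneg_right hj1.le hypos.le)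
    calc U (t*y) ≤ ((2:ℝ)^(-lam))^j * U y := h1.trans (hiter j y hy)
    _ ≤ (2^lam * t^(-lam)) * U y := mul_le_mul_of_nonneg_right key (hUpos y)
    _ = 2^lam * t^(-lam) * U y := by ring

noncomputable def clm (C x : ℝ) : ℝ := max (-C) (min C x)

lemma abs_clm_le {C : ℝ} (hC : 0 ≤ C) (x : ℝ) : |clm C x| ≤ C := by
  rw [abs_le]; constructor
  · exact le_max_left _ _
  · exact max_le (by linarith) (min_le_left _ _)

lemma clm_eq_self {C x : ℝ} (h : |x| ≤ C) : clm C x = x := by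
  rw [abs_le] at h
  rw [clm, min_eq_right h.2, max_eq_right h.1]

lemma abs_sub_clm_le {C x : ℝ} (hC : 0 ≤ C) : |x - clm C x| ≤ |x| := by
  rcases le_total (|x|) C with h | h
  · rw [clm_eq_self h]; simp [abs_nonneg]
  · rcases abs_le.mp (le_refl |x|) with ⟨h1, h2⟩
    rcases le_total x 0 with hx | hx
    · have : clm C x = -C := by
        rw [clm, min_eq_right (by rw [abs_of_nonpos hx] at h; linarith), max_eq_left]
        rw [abs_of_nonpos hx] at h; linarith
      rw [this, abs_of_nonpos hx] at *
      rw [abs_of_nonpos (by linarith : x - -C ≤ 0)]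
      linarith
    · have hxC : C ≤ x := by rw [abs_of_nonneg hx] at h; exact h
      have : clm C x = C := by
        rw [clm, min_eq_left hxC, max_eq_right (by linarith : -C ≤ C)]
      rw [this, abs_of_nonneg (by linarith : 0 ≤ x - C), abs_of_nonneg hx]
      linarith
lemma continuous_clm (C : ℝ) : Continuous (clm C) := by
  unfold clm; fun_prop

/-- Pointwise error bound between `1_{nn>1}·a` and the truncated test function. -/
lemma point_bound {K δ nn a : ℝ} (hK : 1 ≤ K) (hδ0 : 0 < δ) (hδ1 : δ < 1)
    (hnn : 0 ≤ nn) (ha : |a| ≤ nn^2) :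
    |(if 1 < nn then a else 0) - cl ((nn - (1-δ))/δ) * clm (K^2) a|
      ≤ K^2 * (if 1-δ < nn ∧ nn ≤ 1 then 1 else 0) + (if K < nn then nn^2 else 0) := by
  have hK2 : (0:ℝ) ≤ K^2 := sq_nonneg K
  have hsecond : (0:ℝ) ≤ (if K < nn then nn^2 else 0) := by positivity
  rcases le_or_gt nn (1-δ) with h1 | h1
  · -- nn ≤ 1 - δ : everything vanishes
    have hcl : cl ((nn - (1-δ))/δ) = 0 := cl_of_nonpos (by
      apply div_nonpos_of_nonpos_of_nonneg <;> linarith)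
    rw [hcl, if_neg (by intro h; linarith : ¬ 1 < nn)]
    simp only [zero_mul, sub_zero, abs_zero]
    positivity
  · rcases le_or_gt nn 1 with h2 | h2
    · -- band
      rw [if_neg (by intro h; linarith : ¬ 1 < nn), if_pos ⟨h1, h2⟩]
      have : |(0:ℝ) - cl ((nn - (1-δ))/δ) * clm (K^2) a|
          = cl ((nn - (1-δ))/δ) * |clm (K^2) a| := by
        rw [zero_sub, abs_neg, abs_mul, abs_of_nonneg (cl_nonneg _)]
      rw [this]
      have hmm := mul_le_mul (cl_le_one ((nn - (1-δ))/δ)) (abs_clm_le hK2 a)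
        (abs_nonneg _) (by norm_num : (0:ℝ) ≤ 1)
      rw [one_mul] at hmm
      linarith
    · -- nn > 1
      have hcl : cl ((nn - (1-δ))/δ) = 1 := cl_of_one_le (by
        rw [le_div_iff₀ hδ0]; linarith)
      rw [hcl, one_mul, if_pos h2, if_neg (by intro h; exact absurd h2 (not_lt.mpr h.2))]
      rcases le_or_gt nn K with h3 | h3
      · have : |a| ≤ K^2 := le_trans ha (by nlinarith)
        rw [clm_eq_self this, sub_self, abs_zero, if_neg (not_lt.mpr h3)]
        positivity
      · rw [if_pos h3]
        have := abs_sub_clm_le (C := K^2) (x := a) hK2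
        linarith


section Hilbert4
variable {H : Type*} [NormedAddCommGroup H] [InnerProductSpace ℝ H]
    [SecondCountableTopology H] [MeasurableSpace H] [BorelSpace H]

lemma point_bound' {K δ : ℝ} (hK : 1 ≤ K) (hδ0 : 0 < δ) (hδ1 : δ < 1) (p : H × H) :
    |Set.indicator {q : H × H | 1 < Np q} (fun q => ⟪q.1, q.2⟫) p
        - Ff (1-δ) 1 p * clm (K^2) ⟪p.1, p.2⟫|
      ≤ K^2 * Set.indicator {q : H × H | 1-δ < Np q ∧ Np q ≤ 1} (fun _ => (1:ℝ)) p
        + Set.indicator {q : H × H | K < Np q} (fun q => Np q ^ 2) p := by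
  have hFf : Ff (1-δ) 1 p = cl ((Np p - (1-δ))/δ) := by
    rw [Ff, show (1:ℝ) - (1-δ) = δ by ring]
  simp only [Set.indicator_apply, Set.mem_setOf_eq, hFf]
  exact point_bound hK hδ0 hδ1 (Np_nonneg p) (abs_inner_le_Np_sq p)

end Hilbert4

end Stmt6

open Stmt6

/-- For a mean-zero regularly varying pair `[X,Y]` in `L²×L²` with index `-α`,
`α > 2`, exponent measure `μ` normalized by `μ{‖x‖∨‖y‖ > 1} = 1` and scaling `b(n)`, the
conditional expectation `E[⟨X/b(n),Y/b(n)⟩ | ‖X‖∨‖Y‖ > b(n)]` converges to the extremal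
covariance `σ_{XY} = ∫_{‖x‖∨‖y‖>1} ⟨x,y⟩ μ(dx,dy)`. -/
theorem stmt6 {H : Type*} [NormedAddCommGroup H] [InnerProductSpace ℝ H]
    [TopologicalSpace.SeparableSpace H] [CompleteSpace H]
    [MeasurableSpace H] [BorelSpace H]
    {Ω : Type*} [MeasurableSpace Ω] (P : Measure Ω) [IsProbabilityMeasure P]
    (X Y : Ω → H) (hX : Measurable X) (hY : Measurable Y)
    (hmeanX : ∫ ω, X ω ∂P = 0) (hmeanY : ∫ ω, Y ω ∂P = 0)
    (α : ℝ) (hα : 2 < α)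
    (b : ℕ → ℝ) (hbpos : ∀ n, 0 < b n) (hb : Tendsto b atTop atTop)
    (μ : Measure (H × H))
    (hzero : μ ({(0, 0)} : Set (H × H)) = 0)
    (hfin : ∀ A : Set (H × H), MeasurableSet A →
      (∃ ε : ℝ, 0 < ε ∧ ∀ p ∈ A, ε ≤ max ‖p.1‖ ‖p.2‖) → μ A < ⊤)
    (hhom : ∀ t : ℝ, 0 < t → ∀ A : Set (H × H), MeasurableSet A →
      μ (t • A) = ENNReal.ofReal (t ^ (-α)) * μ A)
    (hnorm : μ {p : H × H | 1 < max ‖p.1‖ ‖p.2‖} = 1)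
    (hM0 : ∀ f : H × H → ℝ, Continuous f → (∃ C : ℝ, ∀ p, |f p| ≤ C) →
      (∃ ε : ℝ, 0 < ε ∧ ∀ p : H × H, max ‖p.1‖ ‖p.2‖ < ε → f p = 0) →
      Tendsto (fun n : ℕ =>
          (n : ℝ) * ∫ ω, f ((b n)⁻¹ • X ω, (b n)⁻¹ • Y ω) ∂P) atTop
        (𝓝 (∫ p, f p ∂μ))) :
    Tendsto (fun n : ℕ =>
        (∫ ω in {ω | b n < max ‖X ω‖ ‖Y ω‖},
            ⟪(b n)⁻¹ • X ω, (b n)⁻¹ • Y ω⟫ ∂P) /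
          (P {ω | b n < max ‖X ω‖ ‖Y ω‖}).toReal) atTop
      (𝓝 (∫ p in {p : H × H | 1 < max ‖p.1‖ ‖p.2‖}, ⟪p.1, p.2⟫ ∂μ)) := by
  classical
  haveI : SecondCountableTopology H := UniformSpace.secondCountable_of_separable H
  have hα0 : (0:ℝ) < α := by linarith
  have hTm : Measurable fun ω => max ‖X ω‖ ‖Y ω‖ := hX.norm.max hY.norm
  have hTnn : ∀ ω, (0:ℝ) ≤ max ‖X ω‖ ‖Y ω‖ := fun ω => le_max_of_le_left (norm_nonneg _)
  have hmu : ∀ r : ℝ, 0 < r → μ {p : H × H | r < Np p} = ENNReal.ofReal (r ^ (-α)) :=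
    fun r hr => mu_gt hhom hnorm hr
  have hnU : ∀ t : ℝ, 0 < t →
      Tendsto (fun n : ℕ => (n:ℝ) * (P {ω | t * b n < max ‖X ω‖ ‖Y ω‖}).toReal) atTop
        (𝓝 (t ^ (-α))) := fun t ht => tendsto_nU hX hY hα0 hbpos hfin hmu hM0 ht
  have hUanti : Antitone (fun y : ℝ => (P {ω | y < max ‖X ω‖ ‖Y ω‖}).toReal) := by
    intro y y' hyy'
    apply ENNReal.toReal_mono (measure_ne_top _ _)
    apply measure_mono
    intro ω hω
    exact lt_of_le_of_lt hyy' hω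
  have hUnn : ∀ y : ℝ, 0 ≤ (P {ω | y < max ‖X ω‖ ‖Y ω‖}).toReal :=
    fun _ => ENNReal.toReal_nonneg
  obtain ⟨lam, C, y₀, hlam, hC, hy₀, hpot⟩ :=
    potter (U := fun y : ℝ => (P {ω | y < max ‖X ω‖ ‖Y ω‖}).toReal)
      hα hbpos hb hUanti hUnn (fun t ht => hnU t ht)
  have hpot' : ∀ t y : ℝ, 1 ≤ t → y₀ ≤ y →
      (P {ω | t*y < max ‖X ω‖ ‖Y ω‖}).toReal
        ≤ C * t^(-lam) * (P {ω | y < max ‖X ω‖ ‖Y ω‖}).toReal := hpot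
  have hT2 : Integrable (fun ω => (max ‖X ω‖ ‖Y ω‖) ^ 2) P :=
    empirical_sq_integrable P hTm hTnn hlam hC hy₀ hpot'
  have hDen : Tendsto (fun n : ℕ => (n:ℝ) * (P {ω | b n < max ‖X ω‖ ‖Y ω‖}).toReal) atTop
      (𝓝 1) := by
    have h1 := hnU 1 one_pos
    simp only [one_mul, Real.one_rpow] at h1
    exact h1
  have hNum : Tendsto (fun n : ℕ =>
      (n:ℝ) * ∫ ω in {ω | b n < max ‖X ω‖ ‖Y ω‖}, ⟪(b n)⁻¹ • X ω, (b n)⁻¹ • Y ω⟫ ∂P) atTop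
      (𝓝 (∫ p in {p : H × H | 1 < max ‖p.1‖ ‖p.2‖}, ⟪p.1, p.2⟫ ∂μ)) := by
    -- ====== numerator convergence ======
    have hq1' : (2:ℝ)^((2:ℝ)-lam) < 1 := two_rpow_sub_lt_one hlam
    have hq0' : (0:ℝ) ≤ (2:ℝ)^((2:ℝ)-lam) := Real.rpow_nonneg (by norm_num) _
    set C₂ : ℝ := 4 * C * (1 - (2:ℝ)^((2:ℝ)-lam))⁻¹ with hC₂def
    have hC₂ : 0 < C₂ := by
      apply mul_pos (by linarith : (0:ℝ) < 4 * C)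
      exact inv_pos.mpr (by linarith)
    have hJrw : (∫ p in {p : H × H | 1 < max ‖p.1‖ ‖p.2‖}, ⟪p.1, p.2⟫ ∂μ)
        = ∫ p, Set.indicator {q : H × H | 1 < Np q} (fun q => ⟪q.1, q.2⟫) p ∂μ := by
      rw [integral_indicator (measurableSet_Np_gt 1)]
      rfl
    rw [hJrw]
    have hMuSqHalf : IntegrableOn (fun p : H × H => Np p ^ 2) {p : H × H | 1/2 < Np p} μ :=
      mu_sq_integrableOn hα hmu (by norm_num)
    have hMuSqOne : IntegrableOn (fun p : H × H => Np p ^ 2) {p : H × H | 1 < Np p} μ :=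
      hMuSqHalf.mono_set (fun p hp => by
        simp only [Set.mem_setOf_eq] at hp ⊢; linarith)
    have hIndInt : Integrable
        (Set.indicator {q : H × H | 1 < Np q} (fun q => ⟪q.1, q.2⟫)) μ := by
      rw [integrable_indicator_iff (measurableSet_Np_gt 1)]
      refine Integrable.mono' hMuSqOne continuous_inner.aestronglyMeasurable ?_
      exact Filter.Eventually.of_forall fun p => by
        rw [Real.norm_eq_abs]; exact abs_inner_le_Np_sq p
    rw [Metric.tendsto_atTop]
    intro ε hε
    -- ---- choose K = m ----
    have hKlim : Tendsto (fun m : ℕ => ((m:ℝ))^((2:ℝ)-lam)) atTop (𝓝 0) := by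
      have h := (tendsto_rpow_neg_atTop (by linarith : (0:ℝ) < lam - 2)).comp
        (tendsto_natCast_atTop_atTop (R := ℝ))
      have hexp : (2:ℝ)-lam = -(lam-2) := by ring
      rw [hexp]
      simpa [Function.comp_def] using h
    have htailμ : Tendsto (fun m : ℕ => ∫ p, Set.indicator {q : H × H | (m:ℝ) < Np q}
        (fun q => Np q ^ 2) p ∂μ) atTop (𝓝 0) := by
      have hDCT := tendsto_integral_filter_of_dominated_convergence (μ := μ)
        (l := (atTop : Filter ℕ))
        (F := fun m : ℕ => Set.indicator {q : H × H | (m:ℝ) < Np q} (fun q => Np q ^ 2))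
        (f := fun _ => (0:ℝ))
        (Set.indicator {q : H × H | 1/2 < Np q} (fun q => Np q ^ 2))
        (Filter.Eventually.of_forall fun m =>
          ((continuous_Np.measurable.pow_const 2).indicator
            (measurableSet_Np_gt _)).aestronglyMeasurable)
        ?_ ?_ ?_
      · simpa using hDCT
      · filter_upwards [eventually_ge_atTop 1] with m hm
        refine Filter.Eventually.of_forall fun p => ?_
        by_cases h : p ∈ {q : H × H | (m:ℝ) < Np q}
        · rw [Set.indicator_of_mem h, Set.indicator_of_mem (show p ∈ {q : H × H | 1/2 < Np q} by
            simp only [Set.mem_setOf_eq] at h ⊢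
            have : (1:ℝ) ≤ (m:ℝ) := by exact_mod_cast hm
            linarith)]
          rw [Real.norm_eq_abs, abs_of_nonneg (sq_nonneg _)]
        · rw [Set.indicator_of_notMem h]
          simp only [norm_zero]
          exact Set.indicator_nonneg (fun q _ => sq_nonneg _) p
      · rw [integrable_indicator_iff (measurableSet_Np_gt _)]
        exact hMuSqHalf
      · refine Filter.Eventually.of_forall fun p => ?_
        have hev0 : (fun _ : ℕ => (0:ℝ)) =ᶠ[atTop] fun m : ℕ =>
            Set.indicator {q : H × H | (m:ℝ) < Np q} (fun q => Np q ^ 2) p := by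
          filter_upwards [eventually_ge_atTop (⌈Np p⌉₊ + 1)] with m hm
          refine (Set.indicator_of_notMem ?_ _).symm
          simp only [Set.mem_setOf_eq, not_lt]
          have h1 := Nat.le_ceil (Np p)
          have h2 : ((⌈Np p⌉₊:ℝ) + 1) ≤ (m:ℝ) := by exact_mod_cast hm
          linarith
        exact tendsto_const_nhds.congr' hev0
    obtain ⟨m, hmθ, hmTail, hm1⟩ := ((hKlim.eventually (eventually_lt_nhds
        (show (0:ℝ) < ε/(8*C₂+1) by positivity))).and
      ((htailμ.eventually (eventually_lt_nhds (show (0:ℝ) < ε/8 by linarith))).and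
      (eventually_ge_atTop 1))).exists
    set K : ℝ := (m:ℝ) with hKdef
    have hK1 : (1:ℝ) ≤ K := by rw [hKdef]; exact_mod_cast hm1
    have hKpos : (0:ℝ) < K := by linarith
    have hmK : 2 * C₂ * K^((2:ℝ)-lam) < ε/4 := by
      have hKe : (0:ℝ) ≤ K^((2:ℝ)-lam) := Real.rpow_nonneg (by linarith) _
      have h1 : 2*C₂*(K^((2:ℝ)-lam)) < 2*C₂*(ε/(8*C₂+1)) := by
        apply mul_lt_mul_of_pos_left hmθ (by linarith)
      have h2 : 2*C₂*(ε/(8*C₂+1)) ≤ ε/4 := by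
        have h8 : (0:ℝ) < 8*C₂+1 := by linarith
        have heq : 2*C₂*(ε/(8*C₂+1)) = (2*C₂*ε)/(8*C₂+1) := by ring
        rw [heq, div_le_div_iff₀ h8 (by norm_num : (0:ℝ) < 4)]
        nlinarith [mul_pos hC₂ hε]
      linarith
    -- ---- choose δ ----
    have hcont1 : ContinuousAt (fun d : ℝ => (1-d)^(-α)) 0 := by
      have h1 : ContinuousAt (fun x : ℝ => x ^ (-α)) ((fun d : ℝ => 1 - d) 0) := by
        apply Real.continuousAt_rpow_const
        norm_num
      exact h1.comp (by fun_prop)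
    have h2' : Tendsto (fun d : ℝ => (1-d)^(-α)) (𝓝 0) (𝓝 1) := by
      simpa using hcont1.tendsto
    obtain ⟨δ₀, hδ₀, hδprop⟩ := Metric.eventually_nhds_iff.mp
      (h2'.eventually (eventually_lt_nhds (show (1:ℝ) < 1 + ε/(8*(K^2+1)) by
        have : (0:ℝ) < ε/(8*(K^2+1)) := by positivity
        linarith)))
    set δ : ℝ := min (δ₀/2) (1/4) with hδdef
    have hδpos : 0 < δ := by
      rw [hδdef]; exact lt_min (by linarith) (by norm_num)
    have hδ14 : δ ≤ 1/4 := min_le_right _ _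
    have hδlt1 : δ < 1 := by linarith
    have hδsmall : (1-δ)^(-α) < 1 + ε/(8*(K^2+1)) := by
      apply hδprop
      rw [Real.dist_eq, abs_of_nonneg (by linarith : (0:ℝ) ≤ δ - 0)]
      have : δ ≤ δ₀/2 := min_le_left _ _
      linarith
    have hband1ge : (1:ℝ) ≤ (1-δ)^(-α) := by
      calc (1:ℝ) = 1^(-α) := (Real.one_rpow _).symm
      _ ≤ (1-δ)^(-α) := Real.rpow_le_rpow_of_nonpos (by linarith) (by linarith) (by linarith)
    have hbandbd : K^2 * ((1-δ)^(-α) - 1) < ε/8 := by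
      have h3 : (1-δ)^(-α) - 1 < ε/(8*(K^2+1)) := by linarith
      have h4 : (K^2+1) * (ε/(8*(K^2+1))) = ε/8 := by
        field_simp
      nlinarith [sq_nonneg K, h3, hband1ge]
    -- ---- test function g ----
    set g : H × H → ℝ := fun p => Ff (1-δ) 1 p * clm (K^2) ⟪p.1, p.2⟫ with hgdef
    have hgcont : Continuous g := (Ff_cont _ _).mul ((continuous_clm _).comp continuous_inner)
    have hgabs : ∀ p, |g p| ≤ K^2 := by
      intro p
      rw [hgdef]
      simp only
      rw [abs_mul]
      calc |Ff (1-δ) 1 p| * |clm (K^2) ⟪p.1,p.2⟫| ≤ 1 * K^2 := by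
            apply mul_le_mul _ (abs_clm_le (sq_nonneg K) _) (abs_nonneg _) (by norm_num)
            rw [abs_of_nonneg (Ff_nonneg _ _ _)]
            exact Ff_le_one _ _ _
      _ = K^2 := one_mul _
    have hgvan : ∀ p : H × H, max ‖p.1‖ ‖p.2‖ < 1-δ → g p = 0 := by
      intro p hp
      have hz : Ff (1-δ) 1 p = 0 := Ff_eq_zero (by linarith) (le_of_lt hp)
      rw [hgdef]
      simp only [hz, zero_mul]
    have hglim := hM0 g hgcont ⟨K^2, hgabs⟩ ⟨1-δ, by linarith, hgvan⟩
    -- ---- μ-side error ----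
    have hgint : Integrable g μ := by
      have heqg : g = Set.indicator {q : H × H | 1-δ < Np q} g := by
        funext p
        rw [Set.indicator_apply]
        split_ifs with h
        · rfl
        · have hz : Ff (1-δ) 1 p = 0 :=
            Ff_eq_zero (by linarith) (not_lt.mp (by simpa using h))
          rw [hgdef]
          simp only [hz, zero_mul]
      rw [heqg, integrable_indicator_iff (measurableSet_Np_gt _)]
      have hfin1δ : μ {q : H × H | 1-δ < Np q} ≠ ⊤ :=
        (hfin _ (measurableSet_Np_gt _) ⟨1-δ, by linarith, fun p hp => le_of_lt hp⟩).ne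
      exact Measure.integrableOn_of_bounded (M := K^2) hfin1δ hgcont.aestronglyMeasurable
        (Filter.Eventually.of_forall fun p => by rw [Real.norm_eq_abs]; exact hgabs p)
    have hbandmeas : MeasurableSet {q : H × H | 1-δ < Np q ∧ Np q ≤ 1} :=
      (measurableSet_Np_gt (1-δ)).inter
        (measurableSet_le continuous_Np.measurable measurable_const)
    have hbandfin : μ {q : H × H | 1-δ < Np q ∧ Np q ≤ 1} < ⊤ :=
      lt_of_le_of_lt (measure_mono (fun q hq => hq.1))
        (hfin _ (measurableSet_Np_gt _)
          ⟨1-δ, by linarith, fun p hp => le_of_lt hp⟩)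
    have hbandμ : (μ {q : H × H | 1-δ < Np q ∧ Np q ≤ 1}).toReal ≤ (1-δ)^(-α) - 1 := by
      have hsub2 : {q : H × H | 1 < Np q} ⊆ {q : H × H | 1-δ < Np q} := by
        intro q hq
        simp only [Set.mem_setOf_eq] at hq ⊢
        linarith
      have hsub : {q : H × H | 1-δ < Np q ∧ Np q ≤ 1}
          ⊆ {q : H × H | 1-δ < Np q} \ {q : H × H | 1 < Np q} := by
        intro q hq
        exact ⟨hq.1, by simp only [Set.mem_setOf_eq, not_lt]; exact hq.2⟩
      have hmono := measure_mono (μ := μ) hsub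
      rw [measure_diff hsub2 (measurableSet_Np_gt 1).nullMeasurableSet
        (by rw [hmu 1 one_pos]; exact ENNReal.ofReal_ne_top)] at hmono
      rw [hmu 1 one_pos, hmu (1-δ) (by linarith)] at hmono
      have h1t : ENNReal.ofReal ((1:ℝ)^(-α)) ≤ ENNReal.ofReal ((1-δ)^(-α)) :=
        ENNReal.ofReal_le_ofReal (by rw [Real.one_rpow]; exact hband1ge)
      calc (μ {q : H × H | 1-δ < Np q ∧ Np q ≤ 1}).toReal
          ≤ ((ENNReal.ofReal ((1-δ)^(-α)) - ENNReal.ofReal ((1:ℝ)^(-α)))).toReal :=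
            ENNReal.toReal_mono (ne_top_of_le_ne_top ENNReal.ofReal_ne_top tsub_le_self) hmono
      _ = (1-δ)^(-α) - 1 := by
          rw [ENNReal.toReal_sub_of_le h1t ENNReal.ofReal_ne_top,
            ENNReal.toReal_ofReal (Real.rpow_nonneg (by linarith) _), Real.one_rpow,
            ENNReal.toReal_ofReal (by norm_num : (0:ℝ) ≤ 1)]
    have htailint : Integrable (Set.indicator {q : H × H | K < Np q} (fun q => Np q ^ 2)) μ := by
      rw [integrable_indicator_iff (measurableSet_Np_gt _)]
      exact hMuSqHalf.mono_set (fun q hq => by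
        simp only [Set.mem_setOf_eq] at hq ⊢; linarith)
    have hbandind_int : Integrable (fun p =>
        K^2 * Set.indicator {q : H × H | 1-δ < Np q ∧ Np q ≤ 1} (fun _ => (1:ℝ)) p) μ :=
      (indicator_one_integrable hbandmeas hbandfin).const_mul _
    have hμdiff : |(∫ p, g p ∂μ)
        - ∫ p, Set.indicator {q : H × H | 1 < Np q} (fun q => ⟪q.1, q.2⟫) p ∂μ|
        ≤ K^2 * (μ {q : H × H | 1-δ < Np q ∧ Np q ≤ 1}).toReal
          + ∫ p, Set.indicator {q : H × H | K < Np q} (fun q => Np q ^ 2) p ∂μ := by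
      rw [← integral_sub hgint hIndInt]
      have hIadd : (∫ p, (K^2 * Set.indicator {q : H × H | 1-δ < Np q ∧ Np q ≤ 1}
              (fun _ => (1:ℝ)) p
            + Set.indicator {q : H × H | K < Np q} (fun q => Np q ^ 2) p) ∂μ)
          = (∫ p, K^2 * Set.indicator {q : H × H | 1-δ < Np q ∧ Np q ≤ 1}
              (fun _ => (1:ℝ)) p ∂μ)
            + ∫ p, Set.indicator {q : H × H | K < Np q} (fun q => Np q ^ 2) p ∂μ :=
        integral_add hbandind_int htailint
      have hImul : (∫ p, K^2 * Set.indicator {q : H × H | 1-δ < Np q ∧ Np q ≤ 1}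
            (fun _ => (1:ℝ)) p ∂μ)
          = K^2 * ∫ p, Set.indicator {q : H × H | 1-δ < Np q ∧ Np q ≤ 1}
            (fun _ => (1:ℝ)) p ∂μ := integral_const_mul _ _
      have hIone : (∫ p, Set.indicator {q : H × H | 1-δ < Np q ∧ Np q ≤ 1}
            (fun _ => (1:ℝ)) p ∂μ)
          = (μ {q : H × H | 1-δ < Np q ∧ Np q ≤ 1}).toReal := by
        rw [integral_indicator_const (1:ℝ) hbandmeas, smul_eq_mul, mul_one, measureReal_def]
      calc |∫ p, (g p - Set.indicator {q : H × H | 1 < Np q} (fun q => ⟪q.1, q.2⟫) p) ∂μ|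
          = ‖∫ p, (g p - Set.indicator {q : H × H | 1 < Np q} (fun q => ⟪q.1, q.2⟫) p) ∂μ‖ :=
            (Real.norm_eq_abs _).symm
      _ ≤ ∫ p, ‖g p - Set.indicator {q : H × H | 1 < Np q} (fun q => ⟪q.1, q.2⟫) p‖ ∂μ :=
            norm_integral_le_integral_norm _
      _ ≤ ∫ p, (K^2 * Set.indicator {q : H × H | 1-δ < Np q ∧ Np q ≤ 1}
              (fun _ => (1:ℝ)) p
            + Set.indicator {q : H × H | K < Np q} (fun q => Np q ^ 2) p) ∂μ := by
            refine integral_mono ((hgint.sub hIndInt).norm)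
              (hbandind_int.add htailint) (fun p => ?_)
            rw [Real.norm_eq_abs, abs_sub_comm]
            exact point_bound' hK1 hδpos hδlt1 p
      _ = K^2 * (μ {q : H × H | 1-δ < Np q ∧ Np q ≤ 1}).toReal
            + ∫ p, Set.indicator {q : H × H | K < Np q} (fun q => Np q ^ 2) p ∂μ := by
            rw [hIadd, hImul, hIone]
    have hμclose : |(∫ p, g p ∂μ)
        - ∫ p, Set.indicator {q : H × H | 1 < Np q} (fun q => ⟪q.1, q.2⟫) p ∂μ| < ε/4 := by
      refine lt_of_le_of_lt hμdiff ?_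
      have h5 : K^2 * (μ {q : H × H | 1-δ < Np q ∧ Np q ≤ 1}).toReal
          ≤ K^2 * ((1-δ)^(-α) - 1) :=
        mul_le_mul_of_nonneg_left hbandμ (sq_nonneg K)
      have h6 : K^2 * ((1-δ)^(-α) - 1) < ε/8 := hbandbd
      linarith
    -- ---- E-side ----
    have hbandE : Tendsto (fun n : ℕ => K^2 * ((n:ℝ) *
        ((P {ω | (1-δ) * b n < max ‖X ω‖ ‖Y ω‖}).toReal
          - (P {ω | b n < max ‖X ω‖ ‖Y ω‖}).toReal))) atTop
        (𝓝 (K^2 * ((1-δ)^(-α) - 1))) := by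
      apply Tendsto.const_mul
      have h3 := (hnU (1-δ) (by linarith)).sub hDen
      refine h3.congr fun n => ?_
      rw [mul_sub]
    have hbandEev := hbandE.eventually (eventually_lt_nhds
      (lt_of_lt_of_le hbandbd (by linarith : ε/8 ≤ ε/4)))
    have hZm : ∀ n : ℕ, Measurable fun ω => ((b n)⁻¹ • X ω, (b n)⁻¹ • Y ω) :=
      fun n => (hX.const_smul _).prodMk (hY.const_smul _)
    have hSm : ∀ n : ℕ, MeasurableSet {ω | b n < max ‖X ω‖ ‖Y ω‖} :=
      fun n => measurableSet_lt measurable_const hTm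
    have hNpZeq : ∀ (n : ℕ) ω, Np ((b n)⁻¹ • X ω, (b n)⁻¹ • Y ω)
        = (b n)⁻¹ * max ‖X ω‖ ‖Y ω‖ := by
      intro n ω
      have hpair : ((b n)⁻¹ • X ω, (b n)⁻¹ • Y ω) = (b n)⁻¹ • (X ω, Y ω) := rfl
      rw [hpair, Np_smul (inv_nonneg.mpr (hbpos n).le)]
      rfl
    have hZsq_int : ∀ n : ℕ, Integrable (fun ω => ((b n)⁻¹ * max ‖X ω‖ ‖Y ω‖)^2) P := by
      intro n
      have h := hT2.const_mul (((b n)⁻¹)^2)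
      refine h.congr (Filter.Eventually.of_forall fun ω => ?_)
      simp only [mul_pow]
    have hIndSn_int : ∀ n : ℕ, Integrable (Set.indicator {ω | b n < max ‖X ω‖ ‖Y ω‖}
        (fun ω => ⟪(b n)⁻¹ • X ω, (b n)⁻¹ • Y ω⟫)) P := by
      intro n
      refine Integrable.mono' (hZsq_int n) ?_ ?_
      · exact ((continuous_inner.measurable.comp (hZm n)).indicator
          (hSm n)).aestronglyMeasurable
      · refine Filter.Eventually.of_forall fun ω => ?_
        rw [Real.norm_eq_abs]
        by_cases h : ω ∈ {ω | b n < max ‖X ω‖ ‖Y ω‖}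
        · rw [Set.indicator_of_mem h]
          have h2 := abs_inner_le_Np_sq ((b n)⁻¹ • X ω, (b n)⁻¹ • Y ω)
          rwa [hNpZeq n ω] at h2
        · rw [Set.indicator_of_notMem h, abs_zero]
          exact sq_nonneg _
    have hgZ_int : ∀ n : ℕ, Integrable (fun ω => g ((b n)⁻¹ • X ω, (b n)⁻¹ • Y ω)) P :=
      fun n => Integrable.mono' (integrable_const (K^2))
        (hgcont.comp_aestronglyMeasurable (hZm n).aestronglyMeasurable)
        (Filter.Eventually.of_forall fun ω => by rw [Real.norm_eq_abs]; exact hgabs _)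
    have hbandP_meas : ∀ n : ℕ, MeasurableSet {ω | (1-δ) * b n < max ‖X ω‖ ‖Y ω‖
        ∧ max ‖X ω‖ ‖Y ω‖ ≤ b n} :=
      fun n => (measurableSet_lt measurable_const hTm).inter (measurableSet_le hTm measurable_const)
    have hbandP_int : ∀ n : ℕ, Integrable (fun ω => K^2 *
        Set.indicator {ω | (1-δ) * b n < max ‖X ω‖ ‖Y ω‖ ∧ max ‖X ω‖ ‖Y ω‖ ≤ b n}
          (fun _ => (1:ℝ)) ω) P :=
      fun n => ((integrable_const (1:ℝ)).indicator (hbandP_meas n)).const_mul _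
    have htailP_meas : ∀ n : ℕ, MeasurableSet {ω | K < (b n)⁻¹ * max ‖X ω‖ ‖Y ω‖} :=
      fun n => measurableSet_lt measurable_const (hTm.const_mul _)
    have htailP_int : ∀ n : ℕ, Integrable (Set.indicator
        {ω | K < (b n)⁻¹ * max ‖X ω‖ ‖Y ω‖}
        (fun ω => ((b n)⁻¹ * max ‖X ω‖ ‖Y ω‖)^2)) P := by
      intro n
      refine Integrable.mono' (hZsq_int n)
        ((((hTm.const_mul _).pow_const 2).indicator (htailP_meas n)).aestronglyMeasurable)
        (Filter.Eventually.of_forall fun ω => ?_)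
      rw [Real.norm_eq_abs]
      by_cases h : ω ∈ {ω | K < (b n)⁻¹ * max ‖X ω‖ ‖Y ω‖}
      · rw [Set.indicator_of_mem h, abs_of_nonneg (sq_nonneg _)]
      · rw [Set.indicator_of_notMem h, abs_zero]
        exact sq_nonneg _
    have hptn : ∀ (n : ℕ) ω,
        |Set.indicator {ω' | b n < max ‖X ω'‖ ‖Y ω'‖}
            (fun ω' => ⟪(b n)⁻¹ • X ω', (b n)⁻¹ • Y ω'⟫) ω
          - g ((b n)⁻¹ • X ω, (b n)⁻¹ • Y ω)|
        ≤ K^2 * Set.indicator {ω' | (1-δ) * b n < max ‖X ω'‖ ‖Y ω'‖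
            ∧ max ‖X ω'‖ ‖Y ω'‖ ≤ b n} (fun _ => (1:ℝ)) ω
          + Set.indicator {ω' | K < (b n)⁻¹ * max ‖X ω'‖ ‖Y ω'‖}
            (fun ω' => ((b n)⁻¹ * max ‖X ω'‖ ‖Y ω'‖)^2) ω := by
      intro n ω
      have hbn := hbpos n
      have hpb := point_bound' (H := H) hK1 hδpos hδlt1 ((b n)⁻¹ • X ω, (b n)⁻¹ • Y ω)
      have e1 : Set.indicator {q : H × H | 1 < Np q} (fun q => ⟪q.1, q.2⟫)
            ((b n)⁻¹ • X ω, (b n)⁻¹ • Y ω)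
          = Set.indicator {ω' | b n < max ‖X ω'‖ ‖Y ω'‖}
            (fun ω' => ⟪(b n)⁻¹ • X ω', (b n)⁻¹ • Y ω'⟫) ω := by
        refine indicator_pt _ _ ?_ rfl
        simp only [Set.mem_setOf_eq, hNpZeq n ω]
        rw [lt_inv_mul_iff₀ hbn, mul_one]
      have e2 : Set.indicator {q : H × H | 1-δ < Np q ∧ Np q ≤ 1} (fun _ => (1:ℝ))
            ((b n)⁻¹ • X ω, (b n)⁻¹ • Y ω)
          = Set.indicator {ω' | (1-δ) * b n < max ‖X ω'‖ ‖Y ω'‖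
            ∧ max ‖X ω'‖ ‖Y ω'‖ ≤ b n} (fun _ => (1:ℝ)) ω := by
        refine indicator_pt _ _ ?_ rfl
        simp only [Set.mem_setOf_eq, hNpZeq n ω]
        constructor
        · rintro ⟨h1, h2⟩
          rw [lt_inv_mul_iff₀ hbn] at h1
          rw [inv_mul_le_iff₀ hbn, mul_one] at h2
          exact ⟨by linarith [h1], h2⟩
        · rintro ⟨h1, h2⟩
          constructor
          · rw [lt_inv_mul_iff₀ hbn]
            linarith [h1]
          · rw [inv_mul_le_iff₀ hbn, mul_one]
            exact h2
      have e3 : Set.indicator {q : H × H | K < Np q} (fun q => Np q ^ 2)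
            ((b n)⁻¹ • X ω, (b n)⁻¹ • Y ω)
          = Set.indicator {ω' | K < (b n)⁻¹ * max ‖X ω'‖ ‖Y ω'‖}
            (fun ω' => ((b n)⁻¹ * max ‖X ω'‖ ‖Y ω'‖)^2) ω := by
        refine indicator_pt _ _ ?_ ?_
        · simp only [Set.mem_setOf_eq, hNpZeq n ω]
        · rw [hNpZeq n ω]
      rw [e1, e2, e3] at hpb
      exact hpb
    have hIn_diff : ∀ n : ℕ,
        |(∫ ω in {ω | b n < max ‖X ω‖ ‖Y ω‖}, ⟪(b n)⁻¹ • X ω, (b n)⁻¹ • Y ω⟫ ∂P)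
          - ∫ ω, g ((b n)⁻¹ • X ω, (b n)⁻¹ • Y ω) ∂P|
        ≤ K^2 * (P {ω | (1-δ) * b n < max ‖X ω‖ ‖Y ω‖ ∧ max ‖X ω‖ ‖Y ω‖ ≤ b n}).toReal
          + ∫ ω, Set.indicator {ω' | K < (b n)⁻¹ * max ‖X ω'‖ ‖Y ω'‖}
            (fun ω' => ((b n)⁻¹ * max ‖X ω'‖ ‖Y ω'‖)^2) ω ∂P := by
      intro n
      rw [← integral_indicator (hSm n), ← integral_sub (hIndSn_int n) (hgZ_int n)]
      have hIadd2 : (∫ ω, (K^2 * Set.indicator {ω | (1-δ) * b n < max ‖X ω‖ ‖Y ω‖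
              ∧ max ‖X ω‖ ‖Y ω‖ ≤ b n} (fun _ => (1:ℝ)) ω
            + Set.indicator {ω' | K < (b n)⁻¹ * max ‖X ω'‖ ‖Y ω'‖}
              (fun ω' => ((b n)⁻¹ * max ‖X ω'‖ ‖Y ω'‖)^2) ω) ∂P)
          = (∫ ω, K^2 * Set.indicator {ω | (1-δ) * b n < max ‖X ω‖ ‖Y ω‖
              ∧ max ‖X ω‖ ‖Y ω‖ ≤ b n} (fun _ => (1:ℝ)) ω ∂P)
            + ∫ ω, Set.indicator {ω' | K < (b n)⁻¹ * max ‖X ω'‖ ‖Y ω'‖}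
              (fun ω' => ((b n)⁻¹ * max ‖X ω'‖ ‖Y ω'‖)^2) ω ∂P :=
        integral_add (hbandP_int n) (htailP_int n)
      have hImul2 : (∫ ω, K^2 * Set.indicator {ω | (1-δ) * b n < max ‖X ω‖ ‖Y ω‖
              ∧ max ‖X ω‖ ‖Y ω‖ ≤ b n} (fun _ => (1:ℝ)) ω ∂P)
          = K^2 * ∫ ω, Set.indicator {ω | (1-δ) * b n < max ‖X ω‖ ‖Y ω‖
              ∧ max ‖X ω‖ ‖Y ω‖ ≤ b n} (fun _ => (1:ℝ)) ω ∂P := integral_const_mul _ _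
      have hIone2 : (∫ ω, Set.indicator {ω | (1-δ) * b n < max ‖X ω‖ ‖Y ω‖
              ∧ max ‖X ω‖ ‖Y ω‖ ≤ b n} (fun _ => (1:ℝ)) ω ∂P)
          = (P {ω | (1-δ) * b n < max ‖X ω‖ ‖Y ω‖ ∧ max ‖X ω‖ ‖Y ω‖ ≤ b n}).toReal := by
        rw [integral_indicator_const (1:ℝ) (hbandP_meas n), smul_eq_mul, mul_one, measureReal_def]
      calc |∫ ω, (Set.indicator {ω | b n < max ‖X ω‖ ‖Y ω‖}
              (fun ω => ⟪(b n)⁻¹ • X ω, (b n)⁻¹ • Y ω⟫) ω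
            - g ((b n)⁻¹ • X ω, (b n)⁻¹ • Y ω)) ∂P|
          = ‖∫ ω, (Set.indicator {ω | b n < max ‖X ω‖ ‖Y ω‖}
              (fun ω => ⟪(b n)⁻¹ • X ω, (b n)⁻¹ • Y ω⟫) ω
            - g ((b n)⁻¹ • X ω, (b n)⁻¹ • Y ω)) ∂P‖ := (Real.norm_eq_abs _).symm
      _ ≤ ∫ ω, ‖Set.indicator {ω | b n < max ‖X ω‖ ‖Y ω‖}
              (fun ω => ⟪(b n)⁻¹ • X ω, (b n)⁻¹ • Y ω⟫) ω
            - g ((b n)⁻¹ • X ω, (b n)⁻¹ • Y ω)‖ ∂P :=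
            norm_integral_le_integral_norm _
      _ ≤ ∫ ω, (K^2 * Set.indicator {ω | (1-δ) * b n < max ‖X ω‖ ‖Y ω‖
              ∧ max ‖X ω‖ ‖Y ω‖ ≤ b n} (fun _ => (1:ℝ)) ω
            + Set.indicator {ω' | K < (b n)⁻¹ * max ‖X ω'‖ ‖Y ω'‖}
              (fun ω' => ((b n)⁻¹ * max ‖X ω'‖ ‖Y ω'‖)^2) ω) ∂P := by
            refine integral_mono (((hIndSn_int n).sub (hgZ_int n)).norm)
              ((hbandP_int n).add (htailP_int n)) (fun ω => ?_)
            rw [Real.norm_eq_abs]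
            exact hptn n ω
      _ = K^2 * (P {ω | (1-δ) * b n < max ‖X ω‖ ‖Y ω‖ ∧ max ‖X ω‖ ‖Y ω‖ ≤ b n}).toReal
            + ∫ ω, Set.indicator {ω' | K < (b n)⁻¹ * max ‖X ω'‖ ‖Y ω'‖}
              (fun ω' => ((b n)⁻¹ * max ‖X ω'‖ ‖Y ω'‖)^2) ω ∂P := by
            rw [hIadd2, hImul2, hIone2]
    have hbandPeq : ∀ n : ℕ,
        (P {ω | (1-δ) * b n < max ‖X ω‖ ‖Y ω‖ ∧ max ‖X ω‖ ‖Y ω‖ ≤ b n}).toReal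
        = (P {ω | (1-δ) * b n < max ‖X ω‖ ‖Y ω‖}).toReal
          - (P {ω | b n < max ‖X ω‖ ‖Y ω‖}).toReal := by
      intro n
      have hsubb : {ω | b n < max ‖X ω‖ ‖Y ω‖} ⊆ {ω | (1-δ) * b n < max ‖X ω‖ ‖Y ω‖} := by
        intro ω hω
        simp only [Set.mem_setOf_eq] at hω ⊢
        nlinarith [hbpos n]
      have hseteq : {ω | (1-δ) * b n < max ‖X ω‖ ‖Y ω‖ ∧ max ‖X ω‖ ‖Y ω‖ ≤ b n}
          = {ω | (1-δ) * b n < max ‖X ω‖ ‖Y ω‖} \ {ω | b n < max ‖X ω‖ ‖Y ω‖} := by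
        ext ω
        simp only [Set.mem_setOf_eq, Set.mem_diff, not_lt]
      rw [hseteq, measure_diff hsubb (hSm n).nullMeasurableSet (measure_ne_top _ _),
        ENNReal.toReal_sub_of_le (measure_mono hsubb) (measure_ne_top _ _)]
    have hRn : ∀ n : ℕ, y₀ ≤ b n →
        (∫ ω, Set.indicator {ω' | K < (b n)⁻¹ * max ‖X ω'‖ ‖Y ω'‖}
          (fun ω' => ((b n)⁻¹ * max ‖X ω'‖ ‖Y ω'‖)^2) ω ∂P)
        ≤ C₂ * K^((2:ℝ)-lam) * (P {ω | b n < max ‖X ω‖ ‖Y ω‖}).toReal := by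
      intro n hybn
      have h := empirical_tail P hTm hlam hC hpot' hybn (hbpos n) hK1
      rw [hC₂def]
      exact h
    have hE : ∀ᶠ n : ℕ in atTop,
        |(n:ℝ) * (∫ ω in {ω | b n < max ‖X ω‖ ‖Y ω‖}, ⟪(b n)⁻¹ • X ω, (b n)⁻¹ • Y ω⟫ ∂P)
          - (n:ℝ) * ∫ ω, g ((b n)⁻¹ • X ω, (b n)⁻¹ • Y ω) ∂P| < ε/2 := by
      filter_upwards [hb.eventually_ge_atTop y₀, hbandEev,
        hDen.eventually (eventually_le_nhds (by norm_num : (1:ℝ) < 2))] with n hy hbandn hUn2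
      have h1 := hIn_diff n
      have h2 := hRn n hy
      have hnn : (0:ℝ) ≤ (n:ℝ) := Nat.cast_nonneg n
      have hKe : (0:ℝ) ≤ K^((2:ℝ)-lam) := Real.rpow_nonneg (by linarith) _
      have hRnn : (0:ℝ) ≤ (P {ω | b n < max ‖X ω‖ ‖Y ω‖}).toReal := ENNReal.toReal_nonneg
      rw [← mul_sub, abs_mul, abs_of_nonneg hnn]
      calc (n:ℝ) * |(∫ ω in {ω | b n < max ‖X ω‖ ‖Y ω‖},
              ⟪(b n)⁻¹ • X ω, (b n)⁻¹ • Y ω⟫ ∂P)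
            - ∫ ω, g ((b n)⁻¹ • X ω, (b n)⁻¹ • Y ω) ∂P|
          ≤ (n:ℝ) * (K^2 * (P {ω | (1-δ) * b n < max ‖X ω‖ ‖Y ω‖
              ∧ max ‖X ω‖ ‖Y ω‖ ≤ b n}).toReal
            + ∫ ω, Set.indicator {ω' | K < (b n)⁻¹ * max ‖X ω'‖ ‖Y ω'‖}
              (fun ω' => ((b n)⁻¹ * max ‖X ω'‖ ‖Y ω'‖)^2) ω ∂P) :=
            mul_le_mul_of_nonneg_left h1 hnn
      _ ≤ (n:ℝ) * (K^2 * (P {ω | (1-δ) * b n < max ‖X ω‖ ‖Y ω‖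
              ∧ max ‖X ω‖ ‖Y ω‖ ≤ b n}).toReal
            + C₂ * K^((2:ℝ)-lam) * (P {ω | b n < max ‖X ω‖ ‖Y ω‖}).toReal) := by
            apply mul_le_mul_of_nonneg_left _ hnn
            linarith [h2]
      _ = K^2 * ((n:ℝ) * ((P {ω | (1-δ) * b n < max ‖X ω‖ ‖Y ω‖}).toReal
            - (P {ω | b n < max ‖X ω‖ ‖Y ω‖}).toReal))
          + C₂ * K^((2:ℝ)-lam) * ((n:ℝ) * (P {ω | b n < max ‖X ω‖ ‖Y ω‖}).toReal) := by
            rw [hbandPeq n]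
            ring
      _ < ε/4 + ε/4 := by
            apply add_lt_add_of_lt_of_le hbandn
            calc C₂ * K^((2:ℝ)-lam) * ((n:ℝ) * (P {ω | b n < max ‖X ω‖ ‖Y ω‖}).toReal)
                ≤ C₂ * K^((2:ℝ)-lam) * 2 := by
                  apply mul_le_mul_of_nonneg_left hUn2 (by positivity)
            _ ≤ ε/4 := by linarith [hmK]
      _ = ε/2 := by ring
    obtain ⟨N, hN⟩ := eventually_atTop.mp
      (hE.and (Metric.tendsto_nhds.mp hglim (ε/8) (by linarith)))
    refine ⟨N, fun n hn => ?_⟩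
    obtain ⟨h6, h7⟩ := hN n hn
    rw [Real.dist_eq] at h7 ⊢
    calc |(n:ℝ) * (∫ ω in {ω | b n < max ‖X ω‖ ‖Y ω‖},
            ⟪(b n)⁻¹ • X ω, (b n)⁻¹ • Y ω⟫ ∂P)
          - ∫ p, Set.indicator {q : H × H | 1 < Np q} (fun q => ⟪q.1, q.2⟫) p ∂μ|
        ≤ |(n:ℝ) * (∫ ω in {ω | b n < max ‖X ω‖ ‖Y ω‖},
            ⟪(b n)⁻¹ • X ω, (b n)⁻¹ • Y ω⟫ ∂P)
          - (n:ℝ) * ∫ ω, g ((b n)⁻¹ • X ω, (b n)⁻¹ • Y ω) ∂P|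
          + |(n:ℝ) * (∫ ω, g ((b n)⁻¹ • X ω, (b n)⁻¹ • Y ω) ∂P) - ∫ p, g p ∂μ|
          + |(∫ p, g p ∂μ)
            - ∫ p, Set.indicator {q : H × H | 1 < Np q} (fun q => ⟪q.1, q.2⟫) p ∂μ| := by
          have := abs_sub_le ((n:ℝ) * (∫ ω in {ω | b n < max ‖X ω‖ ‖Y ω‖},
              ⟪(b n)⁻¹ • X ω, (b n)⁻¹ • Y ω⟫ ∂P))
            ((n:ℝ) * ∫ ω, g ((b n)⁻¹ • X ω, (b n)⁻¹ • Y ω) ∂P)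
            (∫ p, Set.indicator {q : H × H | 1 < Np q} (fun q => ⟪q.1, q.2⟫) p ∂μ)
          have h8 := abs_sub_le ((n:ℝ) * ∫ ω, g ((b n)⁻¹ • X ω, (b n)⁻¹ • Y ω) ∂P)
            (∫ p, g p ∂μ)
            (∫ p, Set.indicator {q : H × H | 1 < Np q} (fun q => ⟪q.1, q.2⟫) p ∂μ)
          linarith
    _ < ε/2 + ε/8 + ε/4 := by
          apply add_lt_add (add_lt_add h6 h7) hμclose
    _ ≤ ε := by linarith
  have hfinal := hNum.div hDen one_ne_zero
  rw [div_one] at hfinal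
  refine Tendsto.congr' ?_ hfinal
  filter_upwards [eventually_ge_atTop 1] with n hn
  have hne : ((n:ℝ)) ≠ 0 := Nat.cast_ne_zero.mpr (by omega)
  simp only [Pi.div_apply]
  rw [mul_div_mul_left _ _ hne]
end
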